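/- arXiv:1403.0868 — 8 statements merged into one kernel-verified Lean document; each statement's English description precedes it below -/
import Mathlib

section
/- Let r > 1 and let f be holomorphic on the annulus 𝔸_r. Suppose a : ℤ → ℂ is such that for every z ∈ 𝔸_r the family (a_n zⁿ)_{n ∈ ℤ} is summable with sum f(z) (the Laurent expansion of f on 𝔸_r). Then, as an equality of values in [0, ∞], ∬_{𝔸_r} |f(z)|² (1 − |z|²)² dA(z) = 2π · Σ_{n ∈ ℤ} |a_n|² I_n(r). -/
/-!
In polar coordinates `z = σ e^{iθ}`, the restriction of `f` to the circle `|z| = σ` has the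
absolutely convergent Fourier series `∑ aₙ σⁿ e^{inθ}`, so Parseval gives
`∫_{-π}^{π} |f(σ e^{iθ})|² dθ = 2π ∑ |aₙ|² σ^{2n}`. Integrating this against `(1 - σ²)² σ dσ`
over `1 < σ < r` and exchanging sum and integral (everything is nonnegative), the substitution
`ρ = σ²` turns the `n`-th radial integral into `Iₙ(r)`.
-/

open MeasureTheory Complex Metric

/-- The annulus `𝔸_r = {z : 1 < |z| < r}`. -/
def annulus (r : ℝ) : Set ℂ := {z : ℂ | 1 < ‖z‖ ∧ ‖z‖ < r}

/-- `I_n(r) = (1/2) ∫_1^{r²} ρⁿ (1-ρ)² dρ`. -/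
noncomputable def laurentI (n : ℤ) (r : ℝ) : ℝ :=
  (1 / 2) * ∫ ρ in (1:ℝ)..(r ^ 2), ρ ^ n * (1 - ρ) ^ 2

open Set
open scoped Real ENNReal

theorem integral_exp_int_mul_I (k : ℤ) :
    ∫ θ in (-π)..π, exp (k * θ * I) = if k = 0 then (2 * π : ℂ) else 0 := by
  split_ifs with hk
  · simp [hk]; ring
  · have hkI : (k : ℂ) * I ≠ 0 := by simp [hk]
    simp_rw [mul_right_comm _ _ I]
    rw [integral_exp_mul_complex hkI, div_eq_zero_iff, sub_eq_zero,
      exp_eq_exp_iff_exists_int]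
    exact Or.inl ⟨k, by push_cast; ring⟩

section FourierSeries

variable {c : ℤ → ℂ} {g : ℝ → ℂ}

-- The series converges at `θ = 0`, and in `ℂ` summable means absolutely summable.
theorem summable_norm_of_hasSum_fourier
    (hg : ∀ θ : ℝ, HasSum (fun n : ℤ => c n * exp (n * θ * I)) (g θ)) :
    Summable fun n => ‖c n‖ :=
  summable_norm_iff.mpr (by simpa using (hg 0).summable)

theorem continuous_of_hasSum_fourier
    (hg : ∀ θ : ℝ, HasSum (fun n : ℤ => c n * exp (n * θ * I)) (g θ)) :
    Continuous g := by
  rw [show g = fun θ : ℝ => ∑' n : ℤ, c n * exp (n * θ * I) from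
    funext fun θ => (hg θ).tsum_eq.symm]
  refine continuous_tsum (fun n => by fun_prop) (summable_norm_of_hasSum_fourier hg) fun n θ => ?_
  simp [norm_exp]

theorem integral_exp_neg_mul_of_hasSum_fourier
    (hg : ∀ θ : ℝ, HasSum (fun n : ℤ => c n * exp (n * θ * I)) (g θ)) (n : ℤ) :
    ∫ θ in (-π)..π, exp (-(n * θ * I)) * g θ = 2 * π * c n := by
  have htermwise : HasSum
      (fun m : ℤ => ∫ θ in (-π)..π, exp (-(n * θ * I)) * (c m * exp (m * θ * I)))
      (∫ θ in (-π)..π, exp (-(n * θ * I)) * g θ) := by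
    refine intervalIntegral.hasSum_integral_of_dominated_convergence (fun m _ => ‖c m‖)
      (fun m => by fun_prop) (fun m => ae_of_all _ fun θ _ => ?_)
      (ae_of_all _ fun _ _ => summable_norm_of_hasSum_fourier hg) intervalIntegrable_const
      (ae_of_all _ fun θ _ => (hg θ).mul_left _)
    simp [norm_exp]
  have horth : ∀ m : ℤ, ∫ θ in (-π)..π, exp (-(n * θ * I)) * (c m * exp (m * θ * I)) =
      if m = n then 2 * π * c n else 0 := by
    intro m
    have hexp : ∀ θ : ℝ, exp (-(n * θ * I)) * (c m * exp (m * θ * I)) =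
        c m * exp (((m - n : ℤ) : ℂ) * θ * I) := fun θ => by
      rw [mul_left_comm, ← exp_add]; push_cast; ring_nf
    simp_rw [hexp, intervalIntegral.integral_const_mul, integral_exp_int_mul_I, sub_eq_zero]
    split_ifs with h
    · rw [h, mul_comm]
    · rw [mul_zero]
  simp_rw [horth] at htermwise
  exact htermwise.unique (hasSum_ite_eq n _)

theorem hasSum_two_pi_mul_norm_sq_of_hasSum_fourier
    (hg : ∀ θ : ℝ, HasSum (fun n : ℤ => c n * exp (n * θ * I)) (g θ)) :
    HasSum (fun n => 2 * π * ‖c n‖ ^ 2) (∫ θ in (-π)..π, ‖g θ‖ ^ 2) := by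
  have hc := summable_norm_of_hasSum_fourier hg
  have hgc := continuous_of_hasSum_fourier hg
  have hbound : ∀ θ, ‖g θ‖ ≤ ∑' n, ‖c n‖ := fun θ =>
    (hg θ).norm_le_of_bounded hc.hasSum fun n => by simp [norm_exp]
  have htermwise : HasSum (fun n => ∫ θ in (-π)..π, star (c n * exp (n * θ * I)) * g θ)
      (∫ θ in (-π)..π, star (g θ) * g θ) := by
    refine intervalIntegral.hasSum_integral_of_dominated_convergence
      (fun n _ => ‖c n‖ * ∑' m, ‖c m‖) (fun n => by fun_prop) (fun n => ae_of_all _ fun θ _ => ?_)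
      (ae_of_all _ fun _ _ => hc.mul_right _) intervalIntegrable_const
      (ae_of_all _ fun θ _ => (hg θ).star.mul_right _)
    rw [norm_mul, norm_star, norm_mul]
    simpa [norm_exp] using mul_le_mul_of_nonneg_left (hbound θ) (norm_nonneg (c n))
  have hcoeff : ∀ n : ℤ, ∫ θ in (-π)..π, star (c n * exp (n * θ * I)) * g θ =
      ((2 * π * ‖c n‖ ^ 2 : ℝ) : ℂ) := by
    intro n
    have hconj : ∀ θ : ℝ, star (c n * exp (n * θ * I)) * g θ =
        star (c n) * (exp (-(n * θ * I)) * g θ) := fun θ => by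
      rw [star_mul', ← mul_assoc]
      congr 2
      rw [star_def, ← exp_conj]
      simp
    simp_rw [hconj, intervalIntegral.integral_const_mul,
      integral_exp_neg_mul_of_hasSum_fourier hg, star_def]
    push_cast
    rw [← mul_conj']
    ring
  have hnorm_sq : ∫ θ in (-π)..π, star (g θ) * g θ = ((∫ θ in (-π)..π, ‖g θ‖ ^ 2 : ℝ) : ℂ) := by
    simp_rw [star_def, conj_mul', ← intervalIntegral.integral_ofReal]
    norm_cast
  simp_rw [hcoeff, hnorm_sq] at htermwise
  exact_mod_cast htermwise

theorem lintegral_norm_sq_of_hasSum_fourier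
    (hg : ∀ θ : ℝ, HasSum (fun n : ℤ => c n * exp (n * θ * I)) (g θ)) :
    ∫⁻ θ in Ioo (-π) π, ENNReal.ofReal (‖g θ‖ ^ 2) = ∑' n, ENNReal.ofReal (2 * π * ‖c n‖ ^ 2) := by
  have h := hasSum_two_pi_mul_norm_sq_of_hasSum_fourier hg
  rw [← ENNReal.ofReal_tsum_of_nonneg (fun n => by positivity) h.summable, h.tsum_eq,
    intervalIntegral.integral_of_le (neg_le_self Real.pi_pos.le), integral_Ioc_eq_integral_Ioo,
    ofReal_integral_eq_lintegral_ofReal]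
  · exact (((continuous_of_hasSum_fourier hg).norm.pow 2).integrableOn_Icc).mono_set
      Ioo_subset_Icc_self
  · exact ae_of_all _ fun θ => by positivity

end FourierSeries

theorem measurableSet_annulus (r : ℝ) : MeasurableSet (annulus r) :=
  (isOpen_lt continuous_const continuous_norm |>.inter
    (isOpen_lt continuous_norm continuous_const)).measurableSet

theorem polarCoord_symm_mem_annulus {r : ℝ} {p : ℝ × ℝ} (hp : p.1 ∈ Ioo 1 r) :
    Complex.polarCoord.symm p ∈ annulus r := by
  have : ‖Complex.polarCoord.symm p‖ = p.1 := by
    rw [norm_polarCoord_symm, abs_of_pos (one_pos.trans hp.1)]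
  exact ⟨this ▸ hp.1, this ▸ hp.2⟩

theorem setLIntegral_annulus_eq_polarCoord (r : ℝ) (F : ℂ → ℝ≥0∞) :
    ∫⁻ z in annulus r, F z =
      ∫⁻ p in Ioo 1 r ×ˢ Ioo (-π) π, ENNReal.ofReal p.1 * F (Complex.polarCoord.symm p) := by
  have hrect : Ioo 1 r ×ˢ Ioo (-π) π = (Ioo 1 r ×ˢ univ) ∩ polarCoord.target := by
    ext ⟨σ, θ⟩
    simp only [polarCoord, mem_prod, mem_inter_iff, mem_Ioo, mem_Ioi, mem_univ]
    constructor
    · rintro ⟨hσ, hθ⟩; exact ⟨⟨hσ, trivial⟩, one_pos.trans hσ.1, hθ⟩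
    · rintro ⟨⟨hσ, -⟩, -, hθ⟩; exact ⟨hσ, hθ⟩
  rw [← lintegral_indicator (measurableSet_annulus r), ← Complex.lintegral_comp_polarCoord_symm,
    hrect, ← Measure.restrict_restrict (measurableSet_Ioo.prod MeasurableSet.univ),
    ← lintegral_indicator (measurableSet_Ioo.prod MeasurableSet.univ)]
  refine setLIntegral_congr_fun polarCoord.open_target.measurableSet fun p hp => ?_
  by_cases hσ : p.1 ∈ Ioo 1 r
  · rw [indicator_of_mem (polarCoord_symm_mem_annulus hσ),
      indicator_of_mem (mk_mem_prod hσ (mem_univ p.2)), smul_eq_mul]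
  · have hnorm : ‖Complex.polarCoord.symm p‖ = p.1 := by
      rw [norm_polarCoord_symm, abs_of_pos hp.1]
    have hA : Complex.polarCoord.symm p ∉ annulus r := fun h => hσ (hnorm ▸ h)
    rw [indicator_of_notMem hA,
      indicator_of_notMem fun h => hσ (mem_prod.mp h).1, smul_zero]

theorem laurentI_eq_integral (n : ℤ) {r : ℝ} (hr : 0 < r) :
    laurentI n r = ∫ σ in (1 : ℝ)..r, (σ ^ 2) ^ n * (1 - σ ^ 2) ^ 2 * σ := by
  have hpos : ∀ σ ∈ uIcc 1 r, 0 < σ := fun σ hσ =>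
    lt_of_lt_of_le (lt_min one_pos hr) hσ.1
  have hsubst := intervalIntegral.integral_comp_mul_deriv' (a := 1) (b := r)
    (f := fun σ : ℝ => σ ^ 2) (f' := fun σ => 2 * σ) (g := fun ρ : ℝ => ρ ^ n * (1 - ρ) ^ 2)
    (fun σ _ => by simpa using hasDerivAt_pow 2 σ) (by fun_prop) ?_
  · simp only [Function.comp_def, one_pow] at hsubst
    rw [laurentI, ← hsubst, ← intervalIntegral.integral_const_mul]
    refine intervalIntegral.integral_congr fun σ _ => ?_
    ring
  · rintro _ ⟨σ, hσ, rfl⟩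
    exact ((continuousAt_zpow₀ _ n (Or.inl (pow_pos (hpos σ hσ) 2).ne')).mul
      ((continuousAt_const.sub continuousAt_id).pow 2)).continuousWithinAt

theorem setLIntegral_Ioo_eq_laurentI (n : ℤ) {r : ℝ} (hr : 1 ≤ r) :
    ∫⁻ σ in Ioo 1 r, ENNReal.ofReal ((σ ^ 2) ^ n * (1 - σ ^ 2) ^ 2 * σ) =
      ENNReal.ofReal (laurentI n r) := by
  have hcont : ContinuousOn (fun σ : ℝ => (σ ^ 2) ^ n * (1 - σ ^ 2) ^ 2 * σ) (Icc 1 r) :=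
    fun σ hσ => (((continuousAt_id.pow 2).zpow₀ n
      (Or.inl (pow_pos (one_pos.trans_le hσ.1) 2).ne')).mul (by fun_prop)).mul
      continuousAt_id |>.continuousWithinAt
  rw [laurentI_eq_integral n (one_pos.trans_le hr), intervalIntegral.integral_of_le hr,
    integral_Ioc_eq_integral_Ioo, ofReal_integral_eq_lintegral_ofReal]
  · exact hcont.integrableOn_Icc.mono_set Ioo_subset_Icc_self
  · filter_upwards [ae_restrict_mem measurableSet_Ioo] with σ hσ
    have := one_pos.trans hσ.1
    positivity

theorem polarCoord_symm_zpow (σ θ : ℝ) (n : ℤ) :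
    Complex.polarCoord.symm (σ, θ) ^ n = (σ : ℂ) ^ n * exp (n * θ * I) := by
  rw [Complex.polarCoord_symm_apply, ofReal_cos, ofReal_sin, ← exp_mul_I, mul_zpow,
    ← exp_int_mul, mul_assoc]

theorem lintegral_norm_sq_circle_of_hasSum_laurent {f : ℂ → ℂ} {a : ℤ → ℂ} {σ : ℝ} (hσ : 0 < σ)
    (ha : ∀ θ : ℝ, HasSum (fun n : ℤ => a n * Complex.polarCoord.symm (σ, θ) ^ n)
      (f (Complex.polarCoord.symm (σ, θ)))) :
    ∫⁻ θ in Ioo (-π) π, ENNReal.ofReal (‖f (Complex.polarCoord.symm (σ, θ))‖ ^ 2) =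
      ∑' n, ENNReal.ofReal (2 * π * ‖a n‖ ^ 2 * (σ ^ 2) ^ n) := by
  have hfourier : ∀ θ : ℝ, HasSum (fun n : ℤ => a n * (σ : ℂ) ^ n * exp (n * θ * I))
      (f (Complex.polarCoord.symm (σ, θ))) := fun θ => by
    simpa only [polarCoord_symm_zpow, mul_assoc] using ha θ
  rw [lintegral_norm_sq_of_hasSum_fourier hfourier]
  congr! 2 with n
  have hsq : (σ ^ n) ^ 2 = (σ ^ 2) ^ n := by
    rw [← zpow_natCast, ← zpow_natCast, ← zpow_mul, ← zpow_mul, mul_comm]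
  rw [norm_mul, norm_zpow, norm_real, Real.norm_of_nonneg hσ.le, mul_pow, hsq,
    ← mul_assoc]

theorem lintegral_norm_sq_circle_mul_radial {f : ℂ → ℂ} {a : ℤ → ℂ} {σ : ℝ} (w : ℝ → ℝ)
    (hσ : 0 < σ)
    (ha : ∀ θ : ℝ, HasSum (fun n : ℤ => a n * Complex.polarCoord.symm (σ, θ) ^ n)
      (f (Complex.polarCoord.symm (σ, θ)))) :
    ∫⁻ θ in Ioo (-π) π, ENNReal.ofReal σ * ENNReal.ofReal
        (‖f (Complex.polarCoord.symm (σ, θ))‖ ^ 2 * w ‖Complex.polarCoord.symm (σ, θ)‖) =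
      ∑' n, ENNReal.ofReal (2 * π * ‖a n‖ ^ 2) * ENNReal.ofReal ((σ ^ 2) ^ n * w σ * σ) := by
  have hweight : ∀ θ : ℝ, ENNReal.ofReal σ * ENNReal.ofReal
        (‖f (Complex.polarCoord.symm (σ, θ))‖ ^ 2 * w ‖Complex.polarCoord.symm (σ, θ)‖) =
      ENNReal.ofReal (‖f (Complex.polarCoord.symm (σ, θ))‖ ^ 2) * ENNReal.ofReal (w σ * σ) :=
    fun θ => by
      rw [norm_polarCoord_symm, abs_of_pos hσ, ← ENNReal.ofReal_mul hσ.le,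
        ← ENNReal.ofReal_mul (by positivity)]
      congr 1
      ring
  simp_rw [hweight]
  rw [lintegral_mul_const' _ _ ENNReal.ofReal_ne_top,
    lintegral_norm_sq_circle_of_hasSum_laurent hσ ha, ← ENNReal.tsum_mul_right]
  refine tsum_congr fun n => ?_
  rw [← ENNReal.ofReal_mul (by positivity), ← ENNReal.ofReal_mul (by positivity)]
  congr 1
  ring

theorem setLIntegral_annulus_norm_sq_mul_radial {r : ℝ} {f : ℂ → ℂ} {a : ℤ → ℂ} {w : ℝ → ℝ}
    (hf : ContinuousOn f (annulus r))
    (ha : ∀ z ∈ annulus r, HasSum (fun n : ℤ => a n * z ^ n) (f z)) (hw : Measurable w) :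
    ∫⁻ z in annulus r, ENNReal.ofReal (‖f z‖ ^ 2 * w ‖z‖) =
      ∑' n, ENNReal.ofReal (2 * π * ‖a n‖ ^ 2) *
        ∫⁻ σ in Ioo 1 r, ENNReal.ofReal ((σ ^ 2) ^ n * w σ * σ) := by
  have hps : Continuous fun p : ℝ × ℝ => (Complex.polarCoord.symm p : ℂ) := by
    simp only [Complex.polarCoord_symm_apply]; fun_prop
  have hmeas : AEMeasurable (fun p : ℝ × ℝ => ENNReal.ofReal p.1 *
      ENNReal.ofReal (‖f (Complex.polarCoord.symm p)‖ ^ 2 * w ‖Complex.polarCoord.symm p‖))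
      ((volume.prod volume).restrict (Ioo 1 r ×ˢ Ioo (-π) π)) := by
    have hfps : ContinuousOn (fun p => f (Complex.polarCoord.symm p)) (Ioo 1 r ×ˢ Ioo (-π) π) :=
      hf.comp hps.continuousOn fun p hp => polarCoord_symm_mem_annulus hp.1
    refine (ENNReal.measurable_ofReal.comp measurable_fst).aemeasurable.mul
      (ENNReal.measurable_ofReal.comp_aemeasurable ?_)
    exact ((hfps.norm.pow 2).aemeasurable (measurableSet_Ioo.prod measurableSet_Ioo)).mul
      (hw.comp hps.norm.measurable).aemeasurable
  rw [setLIntegral_annulus_eq_polarCoord, Measure.volume_eq_prod, setLIntegral_prod _ hmeas,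
    setLIntegral_congr_fun measurableSet_Ioo fun σ hσ =>
      lintegral_norm_sq_circle_mul_radial w (one_pos.trans hσ.1) fun θ =>
        ha _ (polarCoord_symm_mem_annulus hσ),
    lintegral_tsum fun n => by fun_prop]
  simp_rw [lintegral_const_mul' _ _ ENNReal.ofReal_ne_top]

/-- If `f` is holomorphic on the annulus `𝔸_r` with Laurent expansion
`f(z) = ∑_{n ∈ ℤ} aₙ zⁿ`, then, as an identity in `[0,∞]`,
`∬_{𝔸_r} |f|² (1-|z|²)² dA = 2π ∑_{n ∈ ℤ} |aₙ|² Iₙ(r)`. -/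
theorem stmt0 (r : ℝ) (hr : 1 < r) (f : ℂ → ℂ) (a : ℤ → ℂ)
    (hf : DifferentiableOn ℂ f (annulus r))
    (ha : ∀ z ∈ annulus r, HasSum (fun n : ℤ => a n * z ^ n) (f z)) :
    (∫⁻ z in annulus r, ENNReal.ofReal (‖f z‖ ^ 2 * (1 - ‖z‖ ^ 2) ^ 2)) =
      ENNReal.ofReal (2 * Real.pi) *
        ∑' n : ℤ, ENNReal.ofReal (‖a n‖ ^ 2 * laurentI n r) := by
  rw [setLIntegral_annulus_norm_sq_mul_radial (w := fun t => (1 - t ^ 2) ^ 2) hf.continuousOn ha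
    (by fun_prop), ← ENNReal.tsum_mul_left]
  refine tsum_congr fun n => ?_
  rw [setLIntegral_Ioo_eq_laurentI n hr.le, ← ENNReal.ofReal_mul (by positivity),
    ← ENNReal.ofReal_mul Real.two_pi_pos.le, mul_assoc]
end

section
/- Let r > 1, let 0 < s < 1, and set r_s = s + (1 − s)r². Then for every integer n ≥ 0, I_n(r) ≥ (r_sⁿ/2) · s(1 − s)²(r² − 1)³. -/
open MeasureTheory

/-- For `r > 1`, `0 < s < 1` and `r_s = s + (1-s)r²`, one has
`I_n(r) ≥ (r_sⁿ/2) · s(1-s)²(r²-1)³` for every integer `n ≥ 0`. -/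
theorem stmt2 (r s : ℝ) (hr : 1 < r) (hs0 : 0 < s) (hs1 : s < 1) :
    ∀ n : ℕ, laurentI n r ≥
      (s + (1 - s) * r ^ 2) ^ n / 2 * (s * (1 - s) ^ 2 * (r ^ 2 - 1) ^ 3) := by
  intro n
  set a := s + (1 - s) * r ^ 2 with ha
  clear_value a
  have hr2 : 1 < r ^ 2 := by nlinarith
  have h1a : 1 < a := by nlinarith
  have har2 : a < r ^ 2 := by nlinarith
  have hint : ∀ x y : ℝ,
      IntervalIntegrable (fun ρ : ℝ => ρ ^ (n : ℤ) * (1 - ρ) ^ 2) volume x y := by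
    intro x y
    simp_rw [zpow_natCast]
    exact (Continuous.intervalIntegrable (by continuity)) x y
  have hsplit : laurentI n r = (1 / 2) *
      ((∫ ρ in (1:ℝ)..a, ρ ^ (n : ℤ) * (1 - ρ) ^ 2) +
        ∫ ρ in a..(r ^ 2), ρ ^ (n : ℤ) * (1 - ρ) ^ 2) := by
    rw [laurentI, intervalIntegral.integral_add_adjacent_intervals (hint 1 a) (hint a (r ^ 2))]
  have h1 : 0 ≤ ∫ ρ in (1:ℝ)..a, ρ ^ (n : ℤ) * (1 - ρ) ^ 2 := by
    apply intervalIntegral.integral_nonneg h1a.le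
    intro x hx
    have hx0 : (0:ℝ) < x := lt_of_lt_of_le one_pos hx.1
    positivity
  have h2 : (a ^ n * (a - 1) ^ 2) * (r ^ 2 - a) ≤
      ∫ ρ in a..(r ^ 2), ρ ^ (n : ℤ) * (1 - ρ) ^ 2 := by
    have hc := intervalIntegral.integral_mono_on (μ := volume) har2.le
      (intervalIntegrable_const (c := a ^ n * (a - 1) ^ 2)) (hint a (r ^ 2))
      (fun x hx => by
        have hax : a ≤ x := hx.1
        have h1x : (1:ℝ) ≤ x := le_trans h1a.le hax
        have hpow : a ^ n ≤ x ^ n := pow_le_pow_left₀ (by linarith) hax n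
        have hsq : (a - 1) ^ 2 ≤ (1 - x) ^ 2 := by nlinarith
        have : a ^ n * (a - 1) ^ 2 ≤ x ^ n * (1 - x) ^ 2 := by
          have h0 : (0:ℝ) ≤ a ^ n := pow_nonneg (by linarith) n
          nlinarith [pow_nonneg (le_trans zero_le_one h1x) n, sq_nonneg (a - 1)]
        simpa [zpow_natCast] using this)
    rw [intervalIntegral.integral_const, smul_eq_mul] at hc
    linarith [hc]
  have hkey : a ^ n / 2 * (s * (1 - s) ^ 2 * (r ^ 2 - 1) ^ 3) =
      (1 / 2) * ((a ^ n * (a - 1) ^ 2) * (r ^ 2 - a)) := by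
    rw [ha]; ring
  rw [ge_iff_le, hsplit, hkey]
  nlinarith [h1, h2]
end

section
/- Let r > 1, let 0 < s' < 1, and set r_{s'} = s' + (1 − s')r². Then for every integer n ≥ 0, I_{−n}(r) ≥ (r_{s'}^{−n}/6) · (1 − s')³(r² − 1)³. -/
open MeasureTheory

/-- For `r > 1`, `0 < s' < 1` and `r_{s'} = s' + (1-s')r²`, one has
`I_{-n}(r) ≥ (r_{s'}^{-n}/6) · (1-s')³(r²-1)³` for every integer `n ≥ 0`. -/
theorem stmt3 (r s' : ℝ) (hr : 1 < r) (hs0 : 0 < s') (hs1 : s' < 1) :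
    ∀ n : ℕ, laurentI (-(n : ℤ)) r ≥
      (s' + (1 - s') * r ^ 2) ^ (-(n : ℤ)) / 6 * ((1 - s') ^ 3 * (r ^ 2 - 1) ^ 3) := by
  intro n
  set b : ℝ := s' + (1 - s') * r ^ 2 with hbdef
  have hr2 : (1:ℝ) < r ^ 2 := by nlinarith
  have hb1 : 1 < b := by rw [hbdef]; nlinarith
  have hbB : b ≤ r ^ 2 := by rw [hbdef]; nlinarith
  have hbpos : 0 < b := by linarith
  set f : ℝ → ℝ := fun ρ => ρ ^ (-(n:ℤ)) * (1 - ρ) ^ 2 with hfdef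
  have hcont : ContinuousOn f (Set.Icc 1 (r ^ 2)) := by
    apply ContinuousOn.mul
    · exact ContinuousOn.zpow₀ continuousOn_id _
        (fun x hx => Or.inl (by have := hx.1; dsimp; linarith))
    · fun_prop
  have hint : ∀ a c : ℝ, 1 ≤ a → a ≤ c → c ≤ r ^ 2 → IntervalIntegrable f volume a c := by
    intro a c ha hac hc
    apply ContinuousOn.intervalIntegrable
    rw [Set.uIcc_of_le hac]
    exact hcont.mono (Set.Icc_subset_Icc ha hc)
  -- pointwise bound on [1, b]
  have hptwise : ∀ x ∈ Set.Icc (1:ℝ) b,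
      b ^ (-(n:ℤ)) * (1 - x) ^ 2 ≤ f x := by
    intro x hx
    have hx1 : (1:ℝ) ≤ x := hx.1
    have hxb : x ≤ b := hx.2
    have hxpos : (0:ℝ) < x := by linarith
    have h1 : b ^ (-(n:ℤ)) ≤ x ^ (-(n:ℤ)) := by
      rw [zpow_neg, zpow_neg, zpow_natCast, zpow_natCast]
      exact inv_anti₀ (pow_pos hxpos n) (pow_le_pow_left₀ (le_of_lt hxpos) hxb n)
    exact mul_le_mul_of_nonneg_right h1 (sq_nonneg _)
  -- the integral of the lower bound on [1, b]
  have hgint : IntervalIntegrable (fun x : ℝ => b ^ (-(n:ℤ)) * (1 - x) ^ 2) volume 1 b := by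
    apply Continuous.intervalIntegrable; fun_prop
  have hsplit : (∫ x in (1:ℝ)..b, f x) + ∫ x in b..(r ^ 2), f x = ∫ x in (1:ℝ)..(r ^ 2), f x :=
    intervalIntegral.integral_add_adjacent_intervals
      (hint 1 b le_rfl (le_of_lt hb1) hbB) (hint b (r ^ 2) (le_of_lt hb1) hbB le_rfl)
  have htail : 0 ≤ ∫ x in b..(r ^ 2), f x := by
    apply intervalIntegral.integral_nonneg hbB
    intro x hx
    have hxpos : (0:ℝ) < x := by have := hx.1; linarith
    exact mul_nonneg (le_of_lt (zpow_pos hxpos _)) (sq_nonneg _)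
  have hmono : ∫ x in (1:ℝ)..b, b ^ (-(n:ℤ)) * (1 - x) ^ 2 ≤ ∫ x in (1:ℝ)..b, f x :=
    intervalIntegral.integral_mono_on (le_of_lt hb1) hgint
      (hint 1 b le_rfl (le_of_lt hb1) hbB) hptwise
  have hcalc : ∫ x in (1:ℝ)..b, b ^ (-(n:ℤ)) * (1 - x) ^ 2
      = b ^ (-(n:ℤ)) * ((b - 1) ^ 3 / 3) := by
    rw [intervalIntegral.integral_const_mul]
    congr 1
    have : ∀ x : ℝ, (1 - x) ^ 2 = (fun y : ℝ => y ^ 2) (x - 1) := by intro x; ring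
    simp_rw [this]
    rw [intervalIntegral.integral_comp_sub_right (fun y : ℝ => y ^ 2) 1]
    rw [integral_pow]
    norm_num
  have hbne : b ^ (-(n:ℤ)) > 0 := zpow_pos hbpos _
  have hkey : laurentI (-(n:ℤ)) r = (1/2) * ∫ x in (1:ℝ)..(r ^ 2), f x := rfl
  rw [ge_iff_le, hkey]
  have hb1eq : b - 1 = (1 - s') * (r ^ 2 - 1) := by rw [hbdef]; ring
  have : b ^ (-(n:ℤ)) / 6 * ((1 - s') ^ 3 * (r ^ 2 - 1) ^ 3)
      = (1/2) * (b ^ (-(n:ℤ)) * ((b - 1) ^ 3 / 3)) := by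
    rw [hb1eq]; ring
  rw [this]
  have := hcalc ▸ hmono
  linarith
end

section
/- Let r > 1 and let z ∈ 𝔸_r (so 1 < |z| < r). Let s satisfy 0 < s < (r² − |z|²)/(r² − 1), and set r_s = s + (1 − s)r² (so that |z|² < r_s). Then Σ_{n=0}^∞ |z|^{2n}/I_n(r) ≤ (2 / (s(1 − s)²(r² − 1)³)) · (r_s / (r_s − |z|²)). -/
open MeasureTheory

lemma laurentI_lower (r s : ℝ) (hr : 1 < r) (hs0 : 0 < s) (hs1 : s < 1) (n : ℕ) :
    1 / 2 * (s * (1 - s) ^ 2 * (r ^ 2 - 1) ^ 3) * (s + (1 - s) * r ^ 2) ^ n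
      ≤ laurentI n r := by
  set rs : ℝ := s + (1 - s) * r ^ 2 with hrs
  have hr2 : 1 < r ^ 2 := by nlinarith
  have h1rs : 1 < rs := by nlinarith
  have hrsr2 : rs < r ^ 2 := by nlinarith
  have hcont : Continuous (fun ρ : ℝ => ρ ^ n * (1 - ρ) ^ 2) := by continuity
  have heq : laurentI n r = 1 / 2 * ∫ ρ in (1:ℝ)..(r ^ 2), ρ ^ n * (1 - ρ) ^ 2 := by
    simp [laurentI, zpow_natCast]
  rw [heq]
  have hsplit : (∫ ρ in (1:ℝ)..(r ^ 2), ρ ^ n * (1 - ρ) ^ 2)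
      = (∫ ρ in (1:ℝ)..rs, ρ ^ n * (1 - ρ) ^ 2)
        + ∫ ρ in rs..(r ^ 2), ρ ^ n * (1 - ρ) ^ 2 := by
    rw [intervalIntegral.integral_add_adjacent_intervals] <;>
      exact hcont.intervalIntegrable _ _
  have h1 : 0 ≤ ∫ ρ in (1:ℝ)..rs, ρ ^ n * (1 - ρ) ^ 2 := by
    apply intervalIntegral.integral_nonneg h1rs.le
    intro ρ hρ
    have : (0:ℝ) ≤ ρ := le_trans zero_le_one hρ.1
    positivity
  have h2 : rs ^ n * (rs - 1) ^ 2 * (r ^ 2 - rs)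
      ≤ ∫ ρ in rs..(r ^ 2), ρ ^ n * (1 - ρ) ^ 2 := by
    have := intervalIntegral.integral_mono_on (μ := volume) (f := fun _ : ℝ => rs ^ n * (rs - 1) ^ 2)
      (g := fun ρ : ℝ => ρ ^ n * (1 - ρ) ^ 2) hrsr2.le
      (continuous_const.intervalIntegrable _ _) (hcont.intervalIntegrable _ _) ?_
    · simp only [intervalIntegral.integral_const, smul_eq_mul] at this
      calc rs ^ n * (rs - 1) ^ 2 * (r ^ 2 - rs)
          = (r ^ 2 - rs) * (rs ^ n * (rs - 1) ^ 2) := by ring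
        _ ≤ _ := this
    · intro ρ hρ
      have h0rs : (0:ℝ) ≤ rs := by linarith
      have hl : rs ^ n ≤ ρ ^ n := pow_le_pow_left₀ h0rs hρ.1 n
      exact mul_le_mul hl (by nlinarith [hρ.1] : (rs - 1) ^ 2 ≤ (1 - ρ) ^ 2)
        (sq_nonneg _) (pow_nonneg (by linarith [hρ.1]) n)
  have key : s * (1 - s) ^ 2 * (r ^ 2 - 1) ^ 3 * rs ^ n
      = rs ^ n * (rs - 1) ^ 2 * (r ^ 2 - rs) := by
    rw [hrs]; ring
  rw [hsplit]
  calc 1 / 2 * (s * (1 - s) ^ 2 * (r ^ 2 - 1) ^ 3) * rs ^ n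
      = 1 / 2 * (rs ^ n * (rs - 1) ^ 2 * (r ^ 2 - rs)) := by rw [← key]; ring
    _ ≤ 1 / 2 * ((∫ ρ in (1:ℝ)..rs, ρ ^ n * (1 - ρ) ^ 2)
        + ∫ ρ in rs..(r ^ 2), ρ ^ n * (1 - ρ) ^ 2) := by linarith

/-- For `z ∈ 𝔸_r` and `0 < s < (r²-|z|²)/(r²-1)`, with `r_s = s + (1-s)r²`,
`∑_{n=0}^∞ |z|^{2n}/Iₙ(r) ≤ (2/(s(1-s)²(r²-1)³)) · r_s/(r_s - |z|²)`. -/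
theorem stmt4 (r s : ℝ) (hr : 1 < r) (z : ℂ) (hz : z ∈ annulus r)
    (hs0 : 0 < s) (hs : s < (r ^ 2 - ‖z‖ ^ 2) / (r ^ 2 - 1)) :
    ∑' n : ℕ, ‖z‖ ^ (2 * n) / laurentI n r ≤
      2 / (s * (1 - s) ^ 2 * (r ^ 2 - 1) ^ 3) *
        ((s + (1 - s) * r ^ 2) / ((s + (1 - s) * r ^ 2) - ‖z‖ ^ 2)) := by
  obtain ⟨hz1, hzr⟩ := hz
  set x : ℝ := ‖z‖ ^ 2 with hx
  set rs : ℝ := s + (1 - s) * r ^ 2 with hrs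
  have hr2 : 1 < r ^ 2 := by nlinarith
  have hx1 : 1 < x := by nlinarith
  have hxr2 : x < r ^ 2 := by nlinarith
  have hden : (0:ℝ) < r ^ 2 - 1 := by linarith
  have hs1 : s < 1 := lt_trans hs ((div_lt_one hden).mpr (by linarith))
  have hxrs : x < rs := by
    have := (lt_div_iff₀ hden).mp hs
    rw [hrs]; nlinarith
  have hrs0 : (0:ℝ) < rs := by nlinarith
  set K : ℝ := s * (1 - s) ^ 2 * (r ^ 2 - 1) ^ 3 with hK
  have hK0 : 0 < K := by
    rw [hK]
    exact mul_pos (mul_pos hs0 (pow_pos (by linarith) 2)) (pow_pos hden 3)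
  set q : ℝ := x / rs with hq
  have hq0 : 0 ≤ q := by positivity
  have hq1 : q < 1 := (div_lt_one hrs0).mpr hxrs
  have hbound : ∀ n : ℕ, ‖z‖ ^ (2 * n) / laurentI n r ≤ 2 / K * q ^ n := by
    intro n
    have hI := laurentI_lower r s hr hs0 hs1 n
    have hIpos : 0 < laurentI (n : ℤ) r :=
      lt_of_lt_of_le (by positivity) hI
    have h1 : ‖z‖ ^ (2 * n) = x ^ n := by rw [hx, ← pow_mul]
    rw [h1]
    have hstep : x ^ n / laurentI n r ≤ x ^ n / (1 / 2 * K * rs ^ n) := by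
      gcongr
    refine hstep.trans_eq ?_
    rw [hq, div_pow]
    field_simp
  have hgsum : Summable (fun n : ℕ => 2 / K * q ^ n) :=
    (summable_geometric_of_lt_one hq0 hq1).mul_left _
  have hlsum : Summable (fun n : ℕ => ‖z‖ ^ (2 * n) / laurentI n r) := by
    apply Summable.of_nonneg_of_le _ hbound hgsum
    intro n
    have hI := laurentI_lower r s hr hs0 hs1 n
    have hIpos : 0 < laurentI (n : ℤ) r := lt_of_lt_of_le (by positivity) hI
    positivity
  calc ∑' n : ℕ, ‖z‖ ^ (2 * n) / laurentI n r
      ≤ ∑' n : ℕ, 2 / K * q ^ n := Summable.tsum_le_tsum hbound hlsum hgsum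
    _ = 2 / K * (1 - q)⁻¹ := by
        rw [tsum_mul_left, tsum_geometric_of_lt_one hq0 hq1]
    _ = 2 / K * (rs / (rs - x)) := by
        congr 1
        rw [hq, show (1 - x / rs) = (rs - x) / rs by field_simp, inv_div]
end

section
/- Let r > 1 and let z ∈ 𝔸_r (so 1 < |z| < r). Let s' satisfy (r² − |z|²)/(r² − 1) < s' < 1, and set r_{s'} = s' + (1 − s')r² (so that r_{s'} < |z|²). Then Σ_{n=1}^∞ |z|^{−2n}/I_{−n}(r) ≤ (6 / ((1 − s')³(r² − 1)³)) · (|z|² / (|z|² − r_{s'})). -/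
open MeasureTheory

lemma laurentI_lb (r s' : ℝ) (hr : 1 < r) (hs0 : 0 < s') (hs1 : s' < 1) (k : ℕ) :
    (1-s')^3*(r^2-1)^3/6 / (s' + (1-s')*r^2)^(k+1) ≤ laurentI (-((k:ℤ)+1)) r := by
  set R := s' + (1-s')*r^2 with hRdef
  have hr2 : 1 < r^2 := by nlinarith
  have h1R : 1 < R := by nlinarith
  have hRr : R ≤ r^2 := by nlinarith
  have key : ∀ ρ:ℝ, ρ ^ (-((k:ℤ)+1)) * (1-ρ)^2 = (1-ρ)^2 * (ρ^(k+1))⁻¹ := by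
    intro ρ
    have h : (-((k:ℤ)+1)) = -((k+1:ℕ):ℤ) := by push_cast; ring
    rw [h, zpow_neg, zpow_natCast]; ring
  have hcont : ContinuousOn (fun ρ:ℝ => (1-ρ)^2 * (ρ^(k+1))⁻¹) (Set.Ici (1:ℝ)) := by
    apply ContinuousOn.mul (by fun_prop)
    apply ContinuousOn.inv₀ (by fun_prop)
    intro x hx
    have : (1:ℝ) ≤ x := hx
    positivity
  have hint : ∀ b : ℝ, 1 ≤ b →
      IntervalIntegrable (fun ρ:ℝ => (1-ρ)^2 * (ρ^(k+1))⁻¹) volume 1 b := by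
    intro b hb
    apply ContinuousOn.intervalIntegrable
    apply hcont.mono
    rw [Set.uIcc_of_le hb]
    exact Set.Icc_subset_Ici_self
  unfold laurentI
  simp_rw [key]
  have step1 : (∫ ρ in (1:ℝ)..R, (1-ρ)^2 * (ρ^(k+1))⁻¹) ≤
      ∫ ρ in (1:ℝ)..(r^2), (1-ρ)^2 * (ρ^(k+1))⁻¹ := by
    refine intervalIntegral.integral_mono_interval le_rfl h1R.le hRr ?_ (hint _ hr2.le)
    filter_upwards [ae_restrict_mem measurableSet_Ioc] with x hx
    have : (1:ℝ) < x := hx.1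
    positivity
  have step2 : (∫ ρ in (1:ℝ)..R, (1-ρ)^2 * (R^(k+1))⁻¹) ≤
      ∫ ρ in (1:ℝ)..R, (1-ρ)^2 * (ρ^(k+1))⁻¹ := by
    apply intervalIntegral.integral_mono_on h1R.le _ (hint _ h1R.le)
    · intro x hx
      have hx1 : (1:ℝ) ≤ x := hx.1
      have hxR : x ≤ R := hx.2
      have h1 : x^(k+1) ≤ R^(k+1) := pow_le_pow_left₀ (by linarith) hxR _
      have h2 : (R^(k+1))⁻¹ ≤ (x^(k+1))⁻¹ := inv_anti₀ (by positivity) h1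
      exact mul_le_mul_of_nonneg_left h2 (by positivity)
    · apply IntervalIntegrable.mul_const
      apply ContinuousOn.intervalIntegrable (by fun_prop)
  have step3 : (∫ ρ in (1:ℝ)..R, (1-ρ)^2 * (R^(k+1))⁻¹) =
      (R-1)^3/3 * (R^(k+1))⁻¹ := by
    rw [intervalIntegral.integral_mul_const]
    congr 1
    have h : ∀ ρ:ℝ, (1-ρ)^2 = ((fun x:ℝ => x^2) (ρ - 1)) := by intro ρ; ring
    simp_rw [h]
    rw [intervalIntegral.integral_comp_sub_right (fun x : ℝ => x^2) 1,
      integral_pow]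
    norm_num
  have hR1 : R - 1 = (1-s')*(r^2-1) := by rw [hRdef]; ring
  have heq : (1-s')^3*(r^2-1)^3/6 / R^(k+1) = (1/2) * ((R-1)^3/3 * (R^(k+1))⁻¹) := by
    rw [hR1]; field_simp; ring
  rw [heq]
  nlinarith [step1, step2, step3]

/-- For `z ∈ 𝔸_r` and `(r²-|z|²)/(r²-1) < s' < 1`, with `r_{s'} = s' + (1-s')r²`,
`∑_{n=1}^∞ |z|^{-2n}/I_{-n}(r) ≤ (6/((1-s')³(r²-1)³)) · |z|²/(|z|² - r_{s'})`. -/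
theorem stmt5 (r s' : ℝ) (hr : 1 < r) (z : ℂ) (hz : z ∈ annulus r)
    (hs : (r ^ 2 - ‖z‖ ^ 2) / (r ^ 2 - 1) < s') (hs1 : s' < 1) :
    ∑' n : ℕ, ‖z‖ ^ (-(2 * ((n : ℤ) + 1))) / laurentI (-((n : ℤ) + 1)) r ≤
      6 / ((1 - s') ^ 3 * (r ^ 2 - 1) ^ 3) *
        (‖z‖ ^ 2 / (‖z‖ ^ 2 - (s' + (1 - s') * r ^ 2))) := by
  obtain ⟨hz1, hzr⟩ := hz
  have hz0 : (0:ℝ) < ‖z‖ := by linarith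
  set m := ‖z‖^2 with hm
  have hm1 : 1 < m := by nlinarith
  have hr2 : 1 < r^2 := by nlinarith
  have hmr : m < r^2 := by nlinarith
  have hs0 : 0 < s' := lt_trans (div_pos (by linarith) (by linarith)) hs
  set R := s' + (1-s')*r^2 with hRdef
  have h1R : 1 < R := by nlinarith
  have hRm : R < m := by
    have h := (div_lt_iff₀ (by linarith : (0:ℝ) < r^2 - 1)).1 hs
    nlinarith
  set C := (1-s')^3*(r^2-1)^3 with hC
  have hC0 : 0 < C := mul_pos (pow_pos (by linarith) 3) (pow_pos (by linarith) 3)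
  set q := R/m with hq
  have hq0 : 0 < q := by positivity
  have hq1 : q < 1 := (div_lt_one (by positivity)).2 hRm
  have hIpos : ∀ n : ℕ, 0 < laurentI (-((n:ℤ)+1)) r := fun n =>
    lt_of_lt_of_le (by positivity) (laurentI_lb r s' hr hs0 hs1 n)
  have hterm : ∀ n : ℕ, ‖z‖ ^ (-(2 * ((n : ℤ) + 1))) / laurentI (-((n : ℤ) + 1)) r ≤
      6/C * q^(n+1) := by
    intro n
    have hexp : (-(2 * ((n : ℤ) + 1))) = -((2*(n+1):ℕ):ℤ) := by push_cast; ring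
    rw [hexp, zpow_neg, zpow_natCast, pow_mul, ← hm]
    have hI := laurentI_lb r s' hr hs0 hs1 n
    rw [← hC] at hI
    calc (m^(n+1))⁻¹ / laurentI (-((n:ℤ)+1)) r
        ≤ (m^(n+1))⁻¹ / (C/6 / R^(n+1)) := by
          apply div_le_div_of_nonneg_left (by positivity) (by positivity)
          convert hI using 2

      _ = 6/C * q^(n+1) := by
          rw [hq, div_pow]
          field_simp
  have hg : Summable (fun n:ℕ => q^(n+1)) := by
    simpa [pow_succ] using (summable_geometric_of_lt_one hq0.le hq1).mul_right q
  have hsum : Summable (fun n:ℕ => 6/C * q^(n+1)) := hg.mul_left _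
  have hnonneg : ∀ n : ℕ, 0 ≤ ‖z‖ ^ (-(2 * ((n : ℤ) + 1))) / laurentI (-((n : ℤ) + 1)) r :=
    fun n => div_nonneg (by positivity) (hIpos n).le
  have hLsum : Summable (fun n:ℕ =>
      ‖z‖ ^ (-(2 * ((n : ℤ) + 1))) / laurentI (-((n : ℤ) + 1)) r) :=
    Summable.of_nonneg_of_le hnonneg hterm hsum
  calc ∑' n : ℕ, ‖z‖ ^ (-(2 * ((n : ℤ) + 1))) / laurentI (-((n : ℤ) + 1)) r
      ≤ ∑' n : ℕ, 6/C * q^(n+1) := Summable.tsum_le_tsum hterm hLsum hsum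
    _ = 6/C * (q * (1-q)⁻¹) := by
        rw [tsum_mul_left]
        congr 1
        simp_rw [pow_succ']
        rw [tsum_mul_left, tsum_geometric_of_lt_one hq0.le hq1]
    _ = 6/C * (R / (m - R)) := by
        congr 1
        rw [hq]
        have hm0 : m ≠ 0 := by positivity
        have hmR : m - R ≠ 0 := by linarith
        field_simp
    _ ≤ 6/C * (m / (m - R)) := by
        have hmR : (0:ℝ) < m - R := by linarith
        gcongr

    _ = 6 / ((1 - s') ^ 3 * (r ^ 2 - 1) ^ 3) * (‖z‖ ^ 2 / (‖z‖ ^ 2 - (s' + (1 - s') * r ^ 2))) := rfl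
end

section
/- There exist δ > 0 and constants 0 < c ≤ C such that for every holomorphic function ψ on 𝔻 satisfying ∬_𝔻 |ψ(z)|² dA(z) < δ, one has c · ∬_𝔻 |ψ(z)|² dA(z) ≤ ∬_𝔻 (1 − |z|²)² |ψ'(z) − ψ(z)²/2|² dA(z) + |ψ(0)|² ≤ C · ∬_𝔻 |ψ(z)|² dA(z). (Here, when ψ = f''/f' is the pre-Schwarzian of a locally injective holomorphic map f, the quantity ψ' − ψ²/2 is the Schwarzian derivative of f; the statement says that near the origin the weighted L² Schwarzian norm together with the value of the pre-Schwarzian at 0 is comparable to the Bergman L² norm of the pre-Schwarzian.) -/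
/-!
Write `ψ = ∑ aₙ zⁿ`. Polar coordinates and Parseval on each circle turn `∬_𝔻 w(|z|) |φ|² dA`, for
holomorphic `φ` and a radial weight `w`, into a weighted sum of the squared Taylor coefficients
of `φ`. Hence `∬ |ψ|² = ∑ π |aₙ|² / (n + 1)` and
`∬ (1 - |z|²)² |ψ'|² = ∑ 2π (n + 1) |aₙ₊₁|² / ((n + 2) (n + 3))`; up to a factor 2 the latter is
the former with its `n = 0` term `π |ψ(0)|²` removed. The Schwarzian term differs from `ψ'` by
`ψ² / 2`, and the point-evaluation bound `(1 - |z|²)² |ψ(z)|² ≤ ∬ |ψ|² / π` gives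
`∬ (1 - |z|²)² |ψ² / 2|² ≤ (∬ |ψ|²)² / (4π)`, which is absorbed once `∬ |ψ|² < 1`.
-/

open MeasureTheory Metric Set Real Filter Asymptotics
open scoped ENNReal ComplexConjugate Nat

theorem hasSum_integral_of_norm_le {α ι E : Type*} [MeasurableSpace α] {μ : Measure α}
    [IsFiniteMeasure μ] [Countable ι] [NormedAddCommGroup E] [NormedSpace ℝ E] [CompleteSpace E]
    {F : ι → α → E} {u : ι → ℝ} (hF : ∀ i, AEStronglyMeasurable (F i) μ) (hu : Summable u)
    (hFu : ∀ i x, ‖F i x‖ ≤ u i) :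
    HasSum (fun i => ∫ x, F i x ∂μ) (∫ x, ∑' i, F i x ∂μ) := by
  have hsum : Summable fun i => ∫ x, ‖F i x‖ ∂μ := (hu.mul_right (μ.real univ)).of_norm_bounded
    fun i => norm_integral_le_of_norm_le_const (ae_of_all _ fun x => by simpa using hFu i x)
  rw [← integral_tsum_of_summable_integral_norm
    (fun i => Integrable.of_bound (hF i) (u i) (ae_of_all _ (hFu i))) hsum]
  exact (hsum.of_norm_bounded fun i => norm_integral_le_integral_norm _).hasSum

theorem setIntegral_Ioo_exp_int_mul_I (k : ℤ) :
    ∫ θ in Ioo (-π) π, Complex.exp (k * θ * Complex.I) = if k = 0 then 2 * π else 0 := by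
  rw [integral_Ioc_eq_integral_Ioo.symm, ← intervalIntegral.integral_of_le (by linarith [pi_pos])]
  split_ifs with hk
  · simp only [hk, Int.cast_zero, zero_mul, Complex.exp_zero, intervalIntegral.integral_const,
      sub_neg_eq_add, Complex.real_smul, mul_one]
    push_cast
    ring
  have hkI : (k : ℂ) * Complex.I ≠ 0 := by simp [hk]
  have hperiodic : Complex.exp (k * Complex.I * π) = Complex.exp (k * Complex.I * ↑(-π)) := by
    rw [show (k : ℂ) * Complex.I * π = k * Complex.I * ↑(-π) + k * (2 * π * Complex.I) by
      push_cast; ring, Complex.exp_add, Complex.exp_int_mul_two_pi_mul_I, mul_one]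
  simp_rw [mul_right_comm _ _ Complex.I]
  rw [integral_exp_mul_complex hkI, hperiodic, sub_self, zero_div, Complex.ofReal_zero]

theorem tsum_sq_le_tsum_mul_tsum_of_sq_le_mul {r f g : ℕ → ℝ} (hr : ∀ n, 0 ≤ r n)
    (hf : ∀ n, 0 ≤ f n) (hg : ∀ n, 0 ≤ g n) (hfs : Summable f) (hgs : Summable g)
    (hrfg : ∀ n, r n ^ 2 ≤ f n * g n) : (∑' n, r n) ^ 2 ≤ (∑' n, f n) * ∑' n, g n := by
  have hrs : Summable r := ((hfs.add hgs).div_const 2).of_nonneg_of_le hr fun n => by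
    nlinarith [hrfg n, sq_nonneg (f n - g n), hf n, hg n, hr n]
  refine le_of_tendsto' (hrs.hasSum.tendsto_sum_nat.pow 2) fun N => ?_
  exact (Finset.sum_sq_le_sum_mul_sum_of_sq_le_mul _ (fun n _ => hf n) (fun n _ => hg n)
    fun n _ => hrfg n).trans (mul_le_mul (hfs.sum_le_tsum _ fun n _ => hf n)
      (hgs.sum_le_tsum _ fun n _ => hg n) (Finset.sum_nonneg fun n _ => hg n)
      (tsum_nonneg hf))

theorem lintegral_ofReal_mul_sq_le_of_le_add {α : Type*} [MeasurableSpace α] {μ : Measure α}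
    {w f g h : α → ℝ} (hw : ∀ x, 0 ≤ w x) (hf : ∀ x, 0 ≤ f x) (hfgh : ∀ x, f x ≤ g x + h x)
    (hg : AEMeasurable (fun x => ENNReal.ofReal (w x * g x ^ 2)) μ) :
    ∫⁻ x, ENNReal.ofReal (w x * f x ^ 2) ∂μ ≤
      2 * ∫⁻ x, ENNReal.ofReal (w x * g x ^ 2) ∂μ +
        2 * ∫⁻ x, ENNReal.ofReal (w x * h x ^ 2) ∂μ := by
  rw [← lintegral_const_mul' _ _ ENNReal.ofNat_ne_top,
    ← lintegral_const_mul' _ _ ENNReal.ofNat_ne_top,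
    ← lintegral_add_left' (hg.const_mul 2)]
  refine lintegral_mono fun x => ?_
  have hsq : w x * f x ^ 2 ≤ 2 * (w x * g x ^ 2) + 2 * (w x * h x ^ 2) := by
    have := pow_le_pow_left₀ (hf x) (hfgh x) 2
    nlinarith [add_sq_le (a := g x) (b := h x), hw x]
  rw [← ENNReal.ofReal_ofNat 2, ← ENNReal.ofReal_mul zero_le_two, ← ENNReal.ofReal_mul zero_le_two,
    ← ENNReal.ofReal_add (by have := hw x; positivity) (by have := hw x; positivity)]
  exact ENNReal.ofReal_le_ofReal hsq

theorem Complex.polarCoord_symm_eq_circleMap (p : ℝ × ℝ) :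
    Complex.polarCoord.symm p = circleMap 0 p.1 p.2 := by
  simp [circleMap_zero, Complex.exp_mul_I]

theorem lintegral_ball_eq_lintegral_polar {R : ℝ} {g : ℂ → ℝ≥0∞} (hg : ContinuousOn g (ball 0 R)) :
    ∫⁻ z in ball (0 : ℂ) R, g z =
      ∫⁻ r in Ioo 0 R, ∫⁻ θ in Ioo (-π) π, ENNReal.ofReal r * g (circleMap 0 r θ) := by
  have hmaps : MapsTo (fun p : ℝ × ℝ => circleMap 0 p.1 p.2) (Ioo 0 R ×ˢ Ioo (-π) π) (ball 0 R) :=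
    fun p hp => by simpa [norm_circleMap_zero, abs_of_pos hp.1.1] using hp.1.2
  have hcont : Continuous fun p : ℝ × ℝ => circleMap 0 p.1 p.2 := by
    simp only [circleMap_zero]
    fun_prop
  have hmeas : MeasurableSet (Ioo 0 R ×ˢ Ioo (-π) π) := measurableSet_Ioo.prod measurableSet_Ioo
  rw [← setLIntegral_prod (fun p => ENNReal.ofReal p.1 * g (circleMap 0 p.1 p.2)) ?_,
    ← Measure.volume_eq_prod,
    ← lintegral_indicator measurableSet_ball, ← Complex.lintegral_comp_polarCoord_symm,
    polarCoord_target, ← lintegral_indicator (measurableSet_Ioi.prod measurableSet_Ioo),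
    ← lintegral_indicator hmeas]
  · refine lintegral_congr fun p => ?_
    simp_rw [Complex.polarCoord_symm_eq_circleMap]
    by_cases hp : p ∈ Ioo 0 R ×ˢ Ioo (-π) π
    · rw [indicator_of_mem (show p ∈ Ioi 0 ×ˢ Ioo (-π) π from ⟨hp.1.1, hp.2⟩),
        indicator_of_mem hp, indicator_of_mem (hmaps hp), smul_eq_mul]
    rw [indicator_of_notMem hp]
    by_cases hpos : p ∈ Ioi 0 ×ˢ Ioo (-π) π
    · rw [indicator_of_mem hpos, indicator_of_notMem, smul_zero]
      intro hball
      exact hp ⟨⟨hpos.1, by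
        simpa [norm_circleMap_zero, abs_of_pos (mem_Ioi.1 hpos.1)] using hball⟩, hpos.2⟩
    · exact indicator_of_notMem hpos _
  · exact (ENNReal.measurable_ofReal.comp measurable_fst).aemeasurable.mul
      ((hg.comp hcont.continuousOn hmaps).aemeasurable hmeas)

section CircleParseval

variable {f : ℝ → ℂ} {a : ℕ → ℂ} {r : ℝ}

theorem mul_circleMap_zero_pow (c : ℂ) (θ : ℝ) (n : ℕ) :
    c * circleMap 0 r θ ^ n = c * r ^ n * Complex.exp (n * θ * Complex.I) := by
  rw [circleMap_zero_pow, circleMap_zero]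
  push_cast
  ring

theorem norm_mul_circleMap_zero_pow (hr : 0 ≤ r) (c : ℂ) (θ : ℝ) (n : ℕ) :
    ‖c * circleMap 0 r θ ^ n‖ = ‖c‖ * r ^ n := by
  simp [norm_circleMap_zero, abs_of_nonneg hr]

theorem hasSum_setIntegral_mul_of_hasSum_circleMap (hr : 0 ≤ r)
    (ha : Summable fun n => ‖a n‖ * r ^ n)
    (hfa : ∀ θ, HasSum (fun n => a n * circleMap 0 r θ ^ n) (f θ)) {g : ℝ → ℂ} (hg : Continuous g)
    {M : ℝ} (hgM : ∀ θ, ‖g θ‖ ≤ M) :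
    HasSum (fun n => ∫ θ in Ioo (-π) π, a n * circleMap 0 r θ ^ n * g θ)
      (∫ θ in Ioo (-π) π, f θ * g θ) := by
  have := hasSum_integral_of_norm_le (μ := volume.restrict (Ioo (-π) π))
    (F := fun n θ => a n * circleMap 0 r θ ^ n * g θ)
    (fun n => (continuous_const.mul (((continuous_circleMap 0 r).pow n))).mul hg
      |>.aestronglyMeasurable) (ha.mul_right M) fun n θ => by
      rw [norm_mul, norm_mul_circleMap_zero_pow hr]
      exact mul_le_mul_of_nonneg_left (hgM θ) (by positivity)
  simpa only [((hfa _).mul_right _).tsum_eq] using this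

theorem setIntegral_mul_exp_neg_of_hasSum_circleMap (hr : 0 ≤ r)
    (ha : Summable fun n => ‖a n‖ * r ^ n)
    (hfa : ∀ θ, HasSum (fun n => a n * circleMap 0 r θ ^ n) (f θ)) (n : ℕ) :
    ∫ θ in Ioo (-π) π, f θ * Complex.exp (-(n * θ * Complex.I)) = 2 * π * (a n * r ^ n) := by
  have hnorm_exp : ∀ θ : ℝ, ‖Complex.exp (-(n * θ * Complex.I))‖ ≤ 1 := fun θ => by
    rw [show -((n : ℂ) * θ * Complex.I) = ((-(n * θ) : ℝ) : ℂ) * Complex.I by push_cast; ring,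
      Complex.norm_exp_ofReal_mul_I]
  refine (hasSum_setIntegral_mul_of_hasSum_circleMap hr ha hfa (by fun_prop) hnorm_exp).unique ?_
  convert hasSum_ite_eq n (2 * π * (a n * r ^ n)) using 1
  funext m
  have hint : ∀ θ : ℝ, a m * circleMap 0 r θ ^ m * Complex.exp (-(n * θ * Complex.I))
      = a m * r ^ m * Complex.exp (((m - n : ℤ) : ℂ) * θ * Complex.I) := fun θ => by
    rw [mul_circleMap_zero_pow, mul_assoc, ← Complex.exp_add]
    push_cast
    ring_nf
  simp_rw [hint, integral_const_mul, setIntegral_Ioo_exp_int_mul_I, sub_eq_zero, Nat.cast_inj]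
  split_ifs with h
  · subst h
    push_cast
    ring
  · simp

theorem hasSum_setIntegral_norm_sq_circle (hr : 0 ≤ r) (hf : Continuous f)
    (ha : Summable fun n => ‖a n‖ * r ^ n)
    (hfa : ∀ θ, HasSum (fun n => a n * circleMap 0 r θ ^ n) (f θ)) :
    HasSum (fun n => 2 * π * (‖a n‖ ^ 2 * r ^ (2 * n))) (∫ θ in Ioo (-π) π, ‖f θ‖ ^ 2) := by
  have hfM : ∀ θ, ‖conj (f θ)‖ ≤ ∑' n, ‖a n‖ * r ^ n := fun θ => by
    rw [RCLike.norm_conj]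
    exact (hfa θ).norm_le_of_bounded ha.hasSum fun n => (norm_mul_circleMap_zero_pow hr _ θ n).le
  have hparseval := hasSum_setIntegral_mul_of_hasSum_circleMap hr ha hfa
    (g := fun θ => conj (f θ)) (Complex.continuous_conj.comp hf) hfM
  simp_rw [Complex.mul_conj', ← Complex.ofReal_pow] at hparseval
  rw [integral_complex_ofReal] at hparseval
  refine Complex.hasSum_ofReal.1 (hparseval.congr_fun fun n => ?_)
  have hconj : ∀ θ : ℝ, a n * circleMap 0 r θ ^ n * conj (f θ)
      = a n * r ^ n * conj (f θ * Complex.exp (-(n * θ * Complex.I))) := fun θ => by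
    rw [mul_circleMap_zero_pow, map_mul, ← Complex.exp_conj]
    simp [mul_comm, mul_assoc]
  simp_rw [hconj, integral_const_mul, integral_conj,
    setIntegral_mul_exp_neg_of_hasSum_circleMap hr ha hfa]
  rw [map_mul, map_mul, map_ofNat, Complex.conj_ofReal, mul_left_comm, mul_left_comm (a n * _),
    Complex.mul_conj', norm_mul, norm_pow, Complex.norm_real, Real.norm_of_nonneg hr]
  push_cast
  ring

end CircleParseval

theorem setIntegral_Ioo_zero_one_pow (k : ℕ) : ∫ r in Ioo (0 : ℝ) 1, r ^ k = 1 / (k + 1) := by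
  rw [← integral_Ioc_eq_integral_Ioo, ← intervalIntegral.integral_of_le zero_le_one, integral_pow]
  simp

theorem setIntegral_Ioo_zero_one_mul_one_sub_sq_sq_mul_pow (n : ℕ) :
    ∫ r in Ioo (0 : ℝ) 1, r * (1 - r ^ 2) ^ 2 * r ^ (2 * n) =
      (1 : ℝ) / ((n + 1) * (n + 2) * (n + 3)) := by
  have hexpand : ∀ r : ℝ, r * (1 - r ^ 2) ^ 2 * r ^ (2 * n)
      = r ^ (2 * n + 1) - 2 * r ^ (2 * n + 3) + r ^ (2 * n + 5) := fun r => by ring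
  have hint : ∀ k : ℕ, IntervalIntegrable (fun r : ℝ => r ^ k) volume 0 1 := fun k =>
    intervalIntegral.intervalIntegrable_pow k
  rw [← integral_Ioc_eq_integral_Ioo, ← intervalIntegral.integral_of_le zero_le_one]
  simp_rw [hexpand]
  rw [intervalIntegral.integral_add ((hint _).sub ((hint _).const_mul 2)) (hint _),
    intervalIntegral.integral_sub (hint _) ((hint _).const_mul 2),
    intervalIntegral.integral_const_mul, integral_pow, integral_pow, integral_pow]
  push_cast
  field_simp
  ring

noncomputable def taylorCoeff (ψ : ℂ → ℂ) (n : ℕ) : ℂ := (n ! : ℂ)⁻¹ * iteratedDeriv n ψ 0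

theorem taylorCoeff_zero (ψ : ℂ → ℂ) : taylorCoeff ψ 0 = ψ 0 := by
  simp [taylorCoeff]

theorem taylorCoeff_deriv (ψ : ℂ → ℂ) (n : ℕ) :
    taylorCoeff (deriv ψ) n = (n + 1) * taylorCoeff ψ (n + 1) := by
  rw [taylorCoeff, taylorCoeff, ← iteratedDeriv_succ', Nat.factorial_succ]
  push_cast
  field_simp

section TaylorCoeff

variable {ψ : ℂ → ℂ}

theorem hasSum_taylorCoeff_mul_pow {R : ℝ} (hψ : DifferentiableOn ℂ ψ (ball 0 R)) {z : ℂ}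
    (hz : z ∈ ball 0 R) : HasSum (fun n => taylorCoeff ψ n * z ^ n) (ψ z) := by
  refine (Complex.hasSum_taylorSeries_on_ball hψ hz).congr_fun fun n => ?_
  rw [taylorCoeff, sub_zero, smul_eq_mul, smul_eq_mul]
  ring

theorem summable_norm_taylorCoeff_mul_pow {R : ℝ} (hψ : DifferentiableOn ℂ ψ (ball 0 R)) {r : ℝ}
    (hr : 0 ≤ r) (hrR : r < R) : Summable fun n => ‖taylorCoeff ψ n‖ * r ^ n := by
  obtain ⟨s, hrs, hsR⟩ := exists_between hrR
  have hs : 0 < s := hr.trans_lt hrs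
  have hbounded : (fun n => ‖taylorCoeff ψ n * (s : ℂ) ^ n‖) =O[atTop] fun _ => (1 : ℝ) :=
    ((hasSum_taylorCoeff_mul_pow hψ (z := s) (by simpa [abs_of_pos hs] using hsR)).summable
      |>.tendsto_atTop_zero.isBigO_one ℝ).norm_left
  have hO := (hbounded.mul (isBigO_refl (fun n => (r / s) ^ n) atTop)).congr_right
    fun n => one_mul _
  refine summable_of_isBigO_nat (summable_geometric_of_lt_one (div_nonneg hr hs.le)
    ((div_lt_one hs).2 hrs)) (hO.congr_left fun n => ?_)
  rw [norm_mul, norm_pow, Complex.norm_real, Real.norm_of_nonneg hs.le, div_pow]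
  field_simp

theorem lintegral_norm_sq_circleMap_eq_tsum {R : ℝ} {f : ℂ → ℂ}
    (hf : DifferentiableOn ℂ f (ball 0 R)) {r : ℝ} (hr : r ∈ Ioo 0 R) :
    ∫⁻ θ in Ioo (-π) π, ENNReal.ofReal (‖f (circleMap 0 r θ)‖ ^ 2) =
      ∑' n, ENNReal.ofReal (2 * π * (‖taylorCoeff f n‖ ^ 2 * r ^ (2 * n))) := by
  have hmem : ∀ θ, circleMap 0 r θ ∈ ball 0 R := fun θ => by
    simpa [norm_circleMap_zero, abs_of_pos hr.1] using hr.2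
  have hfc : Continuous fun θ => f (circleMap 0 r θ) :=
    hf.continuousOn.comp_continuous (continuous_circleMap 0 r) hmem
  have hparseval := hasSum_setIntegral_norm_sq_circle hr.1.le hfc
    (summable_norm_taylorCoeff_mul_pow hf hr.1.le hr.2)
    fun θ => hasSum_taylorCoeff_mul_pow hf (hmem θ)
  have hint : IntegrableOn (fun θ => ‖f (circleMap 0 r θ)‖ ^ 2) (Ioo (-π) π) :=
    (hfc.norm.pow 2).integrableOn_Icc.mono_set Ioo_subset_Icc_self
  rw [← ofReal_integral_eq_lintegral_ofReal hint (ae_of_all _ fun θ => sq_nonneg _),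
    ← hparseval.tsum_eq,
    ENNReal.ofReal_tsum_of_nonneg (fun n => by have := hr.1; positivity) hparseval.summable]

theorem lintegral_ball_weight_mul_norm_sq_eq_tsum {R : ℝ} {f : ℂ → ℂ}
    (hf : DifferentiableOn ℂ f (ball 0 R)) {w : ℝ → ℝ} (hw : Continuous w)
    (hw0 : ∀ r ∈ Ioo 0 R, 0 ≤ w r) :
    ∫⁻ z in ball (0 : ℂ) R, ENNReal.ofReal (w ‖z‖ * ‖f z‖ ^ 2) =
      ∑' n, ENNReal.ofReal
        (2 * π * ‖taylorCoeff f n‖ ^ 2 * ∫ r in Ioo 0 R, r * w r * r ^ (2 * n)) := by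
  have hcont : ContinuousOn (fun z => ENNReal.ofReal (w ‖z‖ * ‖f z‖ ^ 2)) (ball 0 R) :=
    ENNReal.continuous_ofReal.comp_continuousOn
      ((hw.comp continuous_norm).continuousOn.mul (hf.continuousOn.norm.pow 2))
  have hcircle : ∀ r ∈ Ioo 0 R, ∫⁻ θ in Ioo (-π) π,
        ENNReal.ofReal r * ENNReal.ofReal (w ‖circleMap 0 r θ‖ * ‖f (circleMap 0 r θ)‖ ^ 2)
      = ∑' n, ENNReal.ofReal (2 * π * ‖taylorCoeff f n‖ ^ 2 * (r * w r * r ^ (2 * n))) := by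
    intro r hr
    have hrw : 0 ≤ r * w r := mul_nonneg hr.1.le (hw0 r hr)
    simp_rw [norm_circleMap_zero, abs_of_pos hr.1, ← ENNReal.ofReal_mul hr.1.le, ← mul_assoc,
      ENNReal.ofReal_mul hrw]
    rw [lintegral_const_mul' _ _ ENNReal.ofReal_ne_top, lintegral_norm_sq_circleMap_eq_tsum hf hr,
      ← ENNReal.tsum_mul_left]
    refine tsum_congr fun n => ?_
    rw [← ENNReal.ofReal_mul hrw]
    ring_nf
  rw [lintegral_ball_eq_lintegral_polar hcont, setLIntegral_congr_fun measurableSet_Ioo hcircle,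
    lintegral_tsum fun n => by fun_prop]
  refine tsum_congr fun n => ?_
  rw [← integral_const_mul, ofReal_integral_eq_lintegral_ofReal]
  · refine (Continuous.integrableOn_Icc ?_).mono_set Ioo_subset_Icc_self
    fun_prop
  · filter_upwards [ae_restrict_mem measurableSet_Ioo] with r hr
    have := hw0 r hr
    have := hr.1
    positivity

theorem lintegral_ball_norm_sq_eq_tsum (hψ : DifferentiableOn ℂ ψ (ball 0 1)) :
    ∫⁻ z in ball (0 : ℂ) 1, ENNReal.ofReal (‖ψ z‖ ^ 2) =
      ∑' n, ENNReal.ofReal (π * ‖taylorCoeff ψ n‖ ^ 2 / (n + 1)) := by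
  have h := lintegral_ball_weight_mul_norm_sq_eq_tsum hψ (w := fun _ => 1) continuous_const
    fun r _ => zero_le_one
  simp only [one_mul, mul_one] at h
  rw [h]
  refine tsum_congr fun n => ?_
  have hmoment : ∫ r in Ioo (0 : ℝ) 1, r * r ^ (2 * n) = 1 / (2 * n + 2) := by
    simp_rw [← pow_succ', setIntegral_Ioo_zero_one_pow]
    push_cast
    ring
  rw [hmoment]
  field_simp

theorem lintegral_ball_weighted_norm_sq_deriv_eq_tsum (hψ : DifferentiableOn ℂ ψ (ball 0 1)) :
    ∫⁻ z in ball (0 : ℂ) 1, ENNReal.ofReal ((1 - ‖z‖ ^ 2) ^ 2 * ‖deriv ψ z‖ ^ 2) =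
      ∑' n, ENNReal.ofReal
        (2 * π * (n + 1) * ‖taylorCoeff ψ (n + 1)‖ ^ 2 / ((n + 2) * (n + 3))) := by
  rw [lintegral_ball_weight_mul_norm_sq_eq_tsum (hψ.deriv isOpen_ball)
    (w := fun r => (1 - r ^ 2) ^ 2) (by fun_prop) fun r _ => sq_nonneg _]
  refine tsum_congr fun n => ?_
  rw [setIntegral_Ioo_zero_one_mul_one_sub_sq_sq_mul_pow, taylorCoeff_deriv, norm_mul,
    show ((n : ℂ) + 1) = ((n + 1 : ℕ) : ℂ) by push_cast; ring, Complex.norm_natCast]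
  push_cast
  field_simp

theorem lintegral_ball_norm_sq_eq_add_tsum (hψ : DifferentiableOn ℂ ψ (ball 0 1)) :
    ∫⁻ z in ball (0 : ℂ) 1, ENNReal.ofReal (‖ψ z‖ ^ 2) =
      ENNReal.ofReal (π * ‖ψ 0‖ ^ 2) +
        ∑' n, ENNReal.ofReal (π * ‖taylorCoeff ψ (n + 1)‖ ^ 2 / (n + 2)) := by
  rw [lintegral_ball_norm_sq_eq_tsum hψ, tsum_eq_zero_add' ENNReal.summable, taylorCoeff_zero]
  push_cast
  simp only [zero_add, div_one, add_assoc, one_add_one_eq_two]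

theorem ofReal_norm_sq_le_lintegral_ball_norm_sq (hψ : DifferentiableOn ℂ ψ (ball 0 1)) :
    ENNReal.ofReal (‖ψ 0‖ ^ 2) ≤ ∫⁻ z in ball (0 : ℂ) 1, ENNReal.ofReal (‖ψ z‖ ^ 2) := by
  rw [lintegral_ball_norm_sq_eq_add_tsum hψ]
  refine le_add_right (ENNReal.ofReal_le_ofReal ?_)
  nlinarith [pi_gt_three, sq_nonneg ‖ψ 0‖]

theorem lintegral_ball_norm_sq_le (hψ : DifferentiableOn ℂ ψ (ball 0 1)) :
    ∫⁻ z in ball (0 : ℂ) 1, ENNReal.ofReal (‖ψ z‖ ^ 2) ≤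
      4 * ENNReal.ofReal (‖ψ 0‖ ^ 2) +
        2 * ∫⁻ z in ball (0 : ℂ) 1, ENNReal.ofReal ((1 - ‖z‖ ^ 2) ^ 2 * ‖deriv ψ z‖ ^ 2) := by
  rw [lintegral_ball_norm_sq_eq_add_tsum hψ, lintegral_ball_weighted_norm_sq_deriv_eq_tsum hψ,
    ← ENNReal.tsum_mul_left]
  gcongr with n
  · rw [← ENNReal.ofReal_ofNat, ← ENNReal.ofReal_mul (by norm_num)]
    exact ENNReal.ofReal_le_ofReal (by nlinarith [pi_lt_four, sq_nonneg ‖ψ 0‖])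
  · rw [← ENNReal.ofReal_ofNat, ← ENNReal.ofReal_mul (by norm_num)]
    refine ENNReal.ofReal_le_ofReal ?_
    rw [div_le_iff₀ (by positivity), mul_div_assoc', div_mul_eq_mul_div,
      le_div_iff₀ (by positivity)]
    have : 0 ≤ π * ‖taylorCoeff ψ (n + 1)‖ ^ 2 := by positivity
    nlinarith [mul_nonneg this (Nat.cast_nonneg (α := ℝ) n)]

theorem lintegral_ball_weighted_norm_sq_deriv_le (hψ : DifferentiableOn ℂ ψ (ball 0 1)) :
    ∫⁻ z in ball (0 : ℂ) 1, ENNReal.ofReal ((1 - ‖z‖ ^ 2) ^ 2 * ‖deriv ψ z‖ ^ 2) ≤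
      2 * ∫⁻ z in ball (0 : ℂ) 1, ENNReal.ofReal (‖ψ z‖ ^ 2) := by
  rw [lintegral_ball_norm_sq_eq_add_tsum hψ, lintegral_ball_weighted_norm_sq_deriv_eq_tsum hψ]
  refine le_trans ?_ (mul_le_mul' le_rfl le_add_self)
  rw [← ENNReal.tsum_mul_left]
  gcongr with n
  rw [← ENNReal.ofReal_ofNat, ← ENNReal.ofReal_mul (by norm_num)]
  refine ENNReal.ofReal_le_ofReal ?_
  rw [div_le_iff₀ (by positivity), mul_div_assoc', div_mul_eq_mul_div, le_div_iff₀ (by positivity)]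
  have : 0 ≤ π * ‖taylorCoeff ψ (n + 1)‖ ^ 2 := by positivity
  nlinarith [mul_nonneg this (Nat.cast_nonneg (α := ℝ) n)]

/-- The Bergman point-evaluation bound: Cauchy–Schwarz on the Taylor coefficients with weights
`n + 1`, using `∑ (n + 1) ρ ^ (2 n) = (1 - ρ²)⁻²`. -/
theorem sq_one_sub_sq_mul_norm_sq_le (hψ : DifferentiableOn ℂ ψ (ball 0 1))
    (hL : ∫⁻ z in ball (0 : ℂ) 1, ENNReal.ofReal (‖ψ z‖ ^ 2) ≠ ⊤) {z : ℂ}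
    (hz : z ∈ ball (0 : ℂ) 1) :
    (1 - ‖z‖ ^ 2) ^ 2 * ‖ψ z‖ ^ 2 ≤
      (∫⁻ z in ball (0 : ℂ) 1, ENNReal.ofReal (‖ψ z‖ ^ 2)).toReal / π := by
  have hz1 : ‖z‖ < 1 := mem_ball_zero_iff.1 hz
  have hρ : ‖z‖ ^ 2 < 1 := by nlinarith [norm_nonneg z]
  rw [lintegral_ball_norm_sq_eq_tsum hψ] at hL ⊢
  have hcoeff : Summable fun n => ‖taylorCoeff ψ n‖ ^ 2 / (n + 1) := by
    have := (ENNReal.summable_toReal hL).div_const π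
    refine this.congr fun n => ?_
    rw [ENNReal.toReal_ofReal (by positivity)]
    field_simp
  have hgeom := hasSum_choose_mul_geometric_of_norm_lt_one 1
    (show ‖‖z‖ ^ 2‖ < 1 by rwa [norm_of_nonneg (by positivity)])
  simp only [Nat.choose_one_right, Nat.cast_add, Nat.cast_one, one_add_one_eq_two] at hgeom
  have hnorm : ‖ψ z‖ ≤ ∑' n, ‖taylorCoeff ψ n‖ * ‖z‖ ^ n :=
    (hasSum_taylorCoeff_mul_pow hψ hz).norm_le_of_bounded
      (summable_norm_taylorCoeff_mul_pow hψ (norm_nonneg z) hz1).hasSum fun n => by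
        rw [norm_mul, norm_pow]
  have hCS := tsum_sq_le_tsum_mul_tsum_of_sq_le_mul (r := fun n => ‖taylorCoeff ψ n‖ * ‖z‖ ^ n)
    (fun n => by positivity) (fun n => by positivity) (fun n => by positivity) hcoeff
    hgeom.summable fun n => le_of_eq <| by field_simp; ring
  have hL_toReal : (∑' n, ENNReal.ofReal (π * ‖taylorCoeff ψ n‖ ^ 2 / (n + 1))).toReal
      = π * ∑' n, ‖taylorCoeff ψ n‖ ^ 2 / (n + 1) := by
    rw [ENNReal.tsum_toReal_eq fun n => ENNReal.ofReal_ne_top, ← tsum_mul_left]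
    exact tsum_congr fun n => by rw [ENNReal.toReal_ofReal (by positivity)]; ring
  rw [hgeom.tsum_eq] at hCS
  rw [hL_toReal, mul_div_cancel_left₀ _ pi_ne_zero]
  have h1 : 0 < 1 - ‖z‖ ^ 2 := by linarith
  calc (1 - ‖z‖ ^ 2) ^ 2 * ‖ψ z‖ ^ 2
      ≤ (1 - ‖z‖ ^ 2) ^ 2 * (∑' n, ‖taylorCoeff ψ n‖ * ‖z‖ ^ n) ^ 2 := by gcongr
    _ ≤ (1 - ‖z‖ ^ 2) ^ 2 * ((∑' n, ‖taylorCoeff ψ n‖ ^ 2 / (n + 1)) *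
          (1 / (1 - ‖z‖ ^ 2) ^ 2)) := by gcongr
    _ = ∑' n, ‖taylorCoeff ψ n‖ ^ 2 / (n + 1) := by field_simp

theorem lintegral_ball_weighted_norm_sq_sq_div_two_le (hψ : DifferentiableOn ℂ ψ (ball 0 1))
    (hL : ∫⁻ z in ball (0 : ℂ) 1, ENNReal.ofReal (‖ψ z‖ ^ 2) ≠ ⊤) :
    ∫⁻ z in ball (0 : ℂ) 1, ENNReal.ofReal ((1 - ‖z‖ ^ 2) ^ 2 * ‖ψ z ^ 2 / 2‖ ^ 2) ≤
      ENNReal.ofReal ((∫⁻ z in ball (0 : ℂ) 1, ENNReal.ofReal (‖ψ z‖ ^ 2)).toReal / (4 * π)) *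
        ∫⁻ z in ball (0 : ℂ) 1, ENNReal.ofReal (‖ψ z‖ ^ 2) := by
  rw [← lintegral_const_mul' _ _ ENNReal.ofReal_ne_top]
  refine setLIntegral_mono' measurableSet_ball fun z hz => ?_
  rw [← ENNReal.ofReal_mul (by positivity)]
  refine ENNReal.ofReal_le_ofReal ?_
  have := mul_le_mul_of_nonneg_right (sq_one_sub_sq_mul_norm_sq_le hψ hL hz)
    (sq_nonneg ‖ψ z‖)
  rw [norm_div, norm_pow, Complex.norm_ofNat]
  calc (1 - ‖z‖ ^ 2) ^ 2 * (‖ψ z‖ ^ 2 / 2) ^ 2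
      = (1 - ‖z‖ ^ 2) ^ 2 * ‖ψ z‖ ^ 2 * ‖ψ z‖ ^ 2 / 4 := by ring
    _ ≤ _ := by rw [div_le_iff₀ (by norm_num)]; convert this using 1; field_simp

theorem eight_mul_lintegral_ball_weighted_norm_sq_sq_div_two_le
    (hψ : DifferentiableOn ℂ ψ (ball 0 1))
    (hL : ∫⁻ z in ball (0 : ℂ) 1, ENNReal.ofReal (‖ψ z‖ ^ 2) < ENNReal.ofReal 1) :
    8 * ∫⁻ z in ball (0 : ℂ) 1, ENNReal.ofReal ((1 - ‖z‖ ^ 2) ^ 2 * ‖ψ z ^ 2 / 2‖ ^ 2) ≤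
      ∫⁻ z in ball (0 : ℂ) 1, ENNReal.ofReal (‖ψ z‖ ^ 2) := by
  set L := ∫⁻ z in ball (0 : ℂ) 1, ENNReal.ofReal (‖ψ z‖ ^ 2)
  have hL1 : L.toReal < 1 := ENNReal.toReal_lt_of_lt_ofReal hL
  calc 8 * ∫⁻ z in ball (0 : ℂ) 1, ENNReal.ofReal ((1 - ‖z‖ ^ 2) ^ 2 * ‖ψ z ^ 2 / 2‖ ^ 2)
      ≤ 8 * (ENNReal.ofReal (L.toReal / (4 * π)) * L) := by
        gcongr
        exact lintegral_ball_weighted_norm_sq_sq_div_two_le hψ (hL.trans ENNReal.ofReal_lt_top).ne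
    _ = ENNReal.ofReal (2 * L.toReal / π) * L := by
        rw [← mul_assoc, ← ENNReal.ofReal_ofNat 8, ← ENNReal.ofReal_mul (by norm_num)]
        congr 2
        field_simp
        ring
    _ ≤ 1 * L := by
        gcongr
        rw [ENNReal.ofReal_le_one, div_le_one pi_pos]
        linarith [pi_gt_three]
    _ = L := one_mul L

end TaylorCoeff

theorem two_sided_bound_of_comparisons {L P Q W T : ℝ≥0∞} (hL : L ≠ ⊤) (hLW : L ≤ 4 * P + 2 * W)
    (hWL : W ≤ 2 * L) (hPL : P ≤ L) (hWQ : W ≤ 2 * Q + 2 * T) (hQW : Q ≤ 2 * W + 2 * T)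
    (hT : 8 * T ≤ L) : ENNReal.ofReal (1 / 8) * L ≤ Q + P ∧ Q + P ≤ ENNReal.ofReal 6 * L := by
  have hW : W ≠ ⊤ := ne_top_of_le_ne_top (by finiteness) hWL
  have hP : P ≠ ⊤ := ne_top_of_le_ne_top hL hPL
  have hT' : T ≠ ⊤ := ne_top_of_le_ne_top hL ((le_mul_of_one_le_left' (by norm_num)).trans hT)
  have hQ : Q ≠ ⊤ := ne_top_of_le_ne_top (by finiteness) hQW
  lift L to NNReal using hL
  lift P to NNReal using hP
  lift Q to NNReal using hQ
  lift W to NNReal using hW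
  lift T to NNReal using hT'
  rw [ENNReal.ofReal, ENNReal.ofReal, Real.toNNReal_of_nonneg (by norm_num : (0 : ℝ) ≤ 1 / 8),
    Real.toNNReal_of_nonneg (by norm_num : (0 : ℝ) ≤ 6)]
  norm_cast at *
  rw [← NNReal.coe_le_coe, ← NNReal.coe_le_coe]
  rw [← NNReal.coe_le_coe] at hLW hWL hPL hWQ hQW hT
  push_cast at *
  constructor <;> linarith

/-- Near the origin of the Bergman space `A²₁(𝔻)`, the weighted `L²` norm of the
"Schwarzian" combination `ψ' - ψ²/2` together with `|ψ(0)|²` is comparable to the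
Bergman `L²` norm of `ψ`: there are `δ > 0` and `0 < c ≤ C` such that for every
holomorphic `ψ` on `𝔻` with `∬_𝔻 |ψ|² dA < δ`,
`c ∬_𝔻 |ψ|² ≤ ∬_𝔻 (1-|z|²)²|ψ'-ψ²/2|² + |ψ(0)|² ≤ C ∬_𝔻 |ψ|²`. -/
theorem stmt10 :
    ∃ δ > (0 : ℝ), ∃ c C : ℝ, 0 < c ∧ c ≤ C ∧
      ∀ ψ : ℂ → ℂ, DifferentiableOn ℂ ψ (ball (0 : ℂ) 1) →
        (∫⁻ z in ball (0 : ℂ) 1, ENNReal.ofReal (‖ψ z‖ ^ 2)) < ENNReal.ofReal δ →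
        (ENNReal.ofReal c * ∫⁻ z in ball (0 : ℂ) 1, ENNReal.ofReal (‖ψ z‖ ^ 2)) ≤
            (∫⁻ z in ball (0 : ℂ) 1,
              ENNReal.ofReal ((1 - ‖z‖ ^ 2) ^ 2 * ‖deriv ψ z - ψ z ^ 2 / 2‖ ^ 2)) +
              ENNReal.ofReal (‖ψ 0‖ ^ 2) ∧
          (∫⁻ z in ball (0 : ℂ) 1,
              ENNReal.ofReal ((1 - ‖z‖ ^ 2) ^ 2 * ‖deriv ψ z - ψ z ^ 2 / 2‖ ^ 2)) +
              ENNReal.ofReal (‖ψ 0‖ ^ 2) ≤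
            ENNReal.ofReal C * ∫⁻ z in ball (0 : ℂ) 1, ENNReal.ofReal (‖ψ z‖ ^ 2) := by
  refine ⟨1, one_pos, 1 / 8, 6, by norm_num, by norm_num, fun ψ hψ hL => ?_⟩
  have hLtop := (hL.trans ENNReal.ofReal_lt_top).ne
  have hcont : ∀ g : ℂ → ℂ, ContinuousOn g (ball 0 1) → AEMeasurable
      (fun z => ENNReal.ofReal ((1 - ‖z‖ ^ 2) ^ 2 * ‖g z‖ ^ 2)) (volume.restrict (ball 0 1)) :=
    fun g hg => ContinuousOn.aemeasurable (ENNReal.continuous_ofReal.comp_continuousOn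
      ((by fun_prop : Continuous fun z : ℂ => (1 - ‖z‖ ^ 2) ^ 2).continuousOn.mul
        (hg.norm.pow 2))) measurableSet_ball
  have hψ' := (hψ.deriv isOpen_ball).continuousOn
  have hψsq : ContinuousOn (fun z => ψ z ^ 2 / 2) (ball 0 1) := (hψ.continuousOn.pow 2).div_const 2
  refine two_sided_bound_of_comparisons hLtop (lintegral_ball_norm_sq_le hψ)
    (lintegral_ball_weighted_norm_sq_deriv_le hψ) (ofReal_norm_sq_le_lintegral_ball_norm_sq hψ)
    (lintegral_ofReal_mul_sq_le_of_le_add (fun _ => sq_nonneg _) (fun _ => norm_nonneg _)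
      (fun z => norm_le_norm_sub_add _ (ψ z ^ 2 / 2)) (hcont _ (hψ'.sub hψsq)))
    (lintegral_ofReal_mul_sq_le_of_le_add (fun _ => sq_nonneg _) (fun _ => norm_nonneg _)
      (fun z => norm_sub_le _ _) (hcont _ hψ'))
    (eight_mul_lintegral_ball_weighted_norm_sq_sq_div_two_le hψ hL)
end

section
/- Let D ⊆ ℂ be an open disk centered at a point x₀ ∈ ℝ, and let H : D → ℂ be holomorphic and injective with H(D ∩ ℝ) ⊆ ℝ. Then there exist constants C > 0 and D₀ > 0 and an open disk D' ⊆ D centered at x₀ such that C · |Im z| ≤ |Im H(z)| ≤ D₀ · |Im z| for all z ∈ D'. -/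
/-!
Comparing `H` with `conj ∘ H ∘ conj` on the real diameter, the identity theorem gives
`H (conj z) = conj (H z)`; with injectivity, `Im H` vanishes only on the real axis. If `H - H x₀`
vanished to order `n ≥ 2` at `x₀`, its leading coefficient (real, as `H` is real on the axis)
would make `Im H` take both signs on the upper half of a small disk, hence vanish there. So
`a = H'(x₀)` is real and nonzero, and comparing `H z` with the real number `H (Re z)` through the
strict derivative gives `Im H z = a Im z + o(Im z)`.
-/

open Metric Complex ComplexConjugate Filter Topology Real

lemma IsPreconnected.exists_eq_zero_of_mul_nonpos {X : Type*} [TopologicalSpace X] {s : Set X}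
    (hs : IsPreconnected s) {f : X → ℝ} (hf : ContinuousOn f s) {a b : X} (ha : a ∈ s)
    (hb : b ∈ s) (hab : f a * f b ≤ 0) : ∃ c ∈ s, f c = 0 := by
  rcases mul_nonpos_iff.mp hab with ⟨hfa, hfb⟩ | ⟨hfa, hfb⟩
  · exact hs.intermediate_value₂ hb ha hf continuousOn_const hfb hfa
  · exact hs.intermediate_value₂ ha hb hf continuousOn_const hfa hfb

lemma mul_pos_of_abs_sub_lt_abs {x y c : ℝ} (hx : |x - c| < |c|) (hy : |y - c| < |c|) :
    0 < x * y := by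
  rcases lt_trichotomy c 0 with hc | hc | hc
  · rw [abs_of_neg hc] at hx hy
    nlinarith [abs_lt.mp hx, abs_lt.mp hy]
  · exact absurd hx (by simp [hc])
  · rw [abs_of_pos hc] at hx hy
    nlinarith [abs_lt.mp hx, abs_lt.mp hy]

lemma exists_norm_eq_one_pow_eq_I {n : ℕ} (hn : 2 ≤ n) :
    ∃ ζ : ℂ, ‖ζ‖ = 1 ∧ ζ ^ n = I ∧ 0 < ζ.im ∧ 0 < (ζ ^ 3).im := by
  have hn' : (0 : ℝ) < n := by positivity
  have hpow (k : ℕ) : exp (↑(π / (2 * n)) * I) ^ k = exp (↑(k * π / (2 * n)) * I) := by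
    rw [← Complex.exp_nat_mul]; congr 1; push_cast; ring
  have him (k : ℕ) (hk0 : 0 < k) (hk : k ≤ 3) : 0 < (exp (↑(π / (2 * n)) * I) ^ k).im := by
    rw [hpow, exp_ofReal_mul_I_im]
    apply Real.sin_pos_of_pos_of_lt_pi (by positivity)
    rw [div_lt_iff₀ (by positivity)]
    have : (k : ℝ) ≤ 3 := by exact_mod_cast hk
    have : (2 : ℝ) ≤ n := by exact_mod_cast hn
    nlinarith [Real.pi_pos]
  refine ⟨_, norm_exp_ofReal_mul_I _, ?_, by simpa using him 1 one_pos (by norm_num),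
    him 3 three_pos le_rfl⟩
  have hangle : (n * π / (2 * n) : ℝ) = π / 2 := by field_simp
  rw [hpow, hangle]
  push_cast; exact exp_pi_div_two_mul_I

section

variable {x₀ ρ : ℝ} {H h : ℂ → ℂ} {n : ℕ}

lemma conj_mem_ball_ofReal {z : ℂ} (hz : z ∈ ball (x₀ : ℂ) ρ) :
    conj z ∈ ball (x₀ : ℂ) ρ := by
  rwa [mem_ball, ← conj_ofReal x₀, dist_conj_conj]

lemma eventually_im_eq_zero_of_real (hρ : 0 < ρ)
    (hreal : ∀ z ∈ ball (x₀ : ℂ) ρ, z.im = 0 → (H z).im = 0) :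
    ∀ᶠ t : ℝ in 𝓝 x₀, (H t).im = 0 :=
  (continuous_ofReal.tendsto x₀).eventually (isOpen_ball.mem_nhds (mem_ball_self hρ)) |>.mono
    fun t ht => hreal t ht (ofReal_im t)

lemma apply_conj_eq_conj_apply (hρ : 0 < ρ) (hH : DifferentiableOn ℂ H (ball (x₀ : ℂ) ρ))
    (hreal : ∀ z ∈ ball (x₀ : ℂ) ρ, z.im = 0 → (H z).im = 0) {z : ℂ}
    (hz : z ∈ ball (x₀ : ℂ) ρ) : H (conj z) = conj (H z) := by
  set G : ℂ → ℂ := conj ∘ H ∘ conj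
  have hG : DifferentiableOn ℂ G (ball (x₀ : ℂ) ρ) := fun w hw => by
    simpa [G] using ((hH.differentiableAt (isOpen_ball.mem_nhds (conj_mem_ball_ofReal hw))
      ).conj_conj).differentiableWithinAt
  have hofReal : Tendsto ((↑) : ℝ → ℂ) (𝓝[≠] x₀) (𝓝[≠] (x₀ : ℂ)) :=
    continuous_ofReal.continuousWithinAt.tendsto_nhdsWithin fun t ht => ofReal_injective.ne ht
  have hfreq : ∃ᶠ w in 𝓝[≠] (x₀ : ℂ), H w = G w := by
    refine hofReal.frequently (Eventually.frequently ?_)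
    filter_upwards [(eventually_im_eq_zero_of_real hρ hreal).filter_mono nhdsWithin_le_nhds]
      with t ht
    simp [G, conj_eq_iff_im.mpr ht]
  have hEq := (hH.analyticOnNhd isOpen_ball).eqOn_of_preconnected_of_frequently_eq
    (hG.analyticOnNhd isOpen_ball) (convex_ball _ _).isPreconnected (mem_ball_self hρ) hfreq
  simpa [G] using hEq (conj_mem_ball_ofReal hz)

lemma im_ne_zero_of_injOn (hρ : 0 < ρ) (hH : DifferentiableOn ℂ H (ball (x₀ : ℂ) ρ))
    (hinj : Set.InjOn H (ball (x₀ : ℂ) ρ))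
    (hreal : ∀ z ∈ ball (x₀ : ℂ) ρ, z.im = 0 → (H z).im = 0) {z : ℂ}
    (hz : z ∈ ball (x₀ : ℂ) ρ) (him : z.im ≠ 0) : (H z).im ≠ 0 := fun hHz => by
  refine him (conj_eq_iff_im.mp (hinj (conj_mem_ball_ofReal hz) hz ?_))
  rw [apply_conj_eq_conj_apply hρ hH hreal hz, conj_eq_iff_im.mpr hHz]

lemma im_eq_zero_of_eventuallyEq_pow_smul (hreal : ∀ᶠ t : ℝ in 𝓝 x₀, (H t).im = 0)
    (hh : ContinuousAt h x₀) (hfac : ∀ᶠ z in 𝓝 (x₀ : ℂ), H z - H x₀ = (z - x₀) ^ n • h z) :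
    (h x₀).im = 0 := by
  have hzero : ∀ᶠ t : ℝ in 𝓝[≠] x₀, (h t).im ∈ ({0} : Set ℝ) := by
    filter_upwards [(hreal.and ((continuous_ofReal.tendsto x₀).eventually hfac)).filter_mono
      nhdsWithin_le_nhds, self_mem_nhdsWithin] with t ⟨ht, htfac⟩ hne
    have him := congrArg Complex.im htfac
    rw [← ofReal_sub, ← ofReal_pow, smul_eq_mul, im_ofReal_mul, sub_im, ht,
      hreal.self_of_nhds, sub_zero] at him
    exact (mul_eq_zero.mp him.symm).resolve_left (pow_ne_zero _ (sub_ne_zero.mpr hne))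
  exact isClosed_singleton.mem_of_frequently_of_tendsto hzero.frequently
    ((continuous_im.continuousAt.comp (hh.comp continuous_ofReal.continuousAt)).tendsto
      |>.mono_left nhdsWithin_le_nhds)

lemma hasDerivAt_of_eventuallyEq_sub_smul (hh : ContinuousAt h x₀)
    (hfac : ∀ᶠ z in 𝓝 (x₀ : ℂ), H z - H x₀ = (z - x₀) • h z) : HasDerivAt H (h x₀) x₀ := by
  rw [hasDerivAt_iff_tendsto_slope]
  refine (hh.tendsto.mono_left nhdsWithin_le_nhds).congr' ?_
  filter_upwards [hfac.filter_mono nhdsWithin_le_nhds, self_mem_nhdsWithin] with z hz hne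
  rw [slope_def_module, hz, inv_smul_smul₀ (sub_ne_zero.mpr hne)]

lemma lt_two_of_eventuallyEq_pow_smul (hHc : ∀ᶠ z in 𝓝 (x₀ : ℂ), ContinuousAt H z)
    (himne : ∀ᶠ z in 𝓝 (x₀ : ℂ), 0 < z.im → (H z).im ≠ 0) (hx₀ : (H x₀).im = 0)
    (hh : ContinuousAt h x₀) (ha_im : (h x₀).im = 0) (ha : h x₀ ≠ 0)
    (hfac : ∀ᶠ z in 𝓝 (x₀ : ℂ), H z - H x₀ = (z - x₀) ^ n • h z) : n < 2 := by
  by_contra! hn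
  obtain ⟨ζ, hζ_norm, hζ_pow, hζ_im, hζ3_im⟩ := exists_norm_eq_one_pow_eq_I hn
  have ha_re : 0 < |(h x₀).re| := abs_pos.mpr fun h0 => ha (Complex.ext h0 ha_im)
  obtain ⟨δ, hδ, hnear⟩ := eventually_nhds_iff_ball.mp
    (((hHc.and himne).and hfac).and (hh.eventually (ball_mem_nhds _ ha_re)))
  obtain ⟨r, hr, hrδ⟩ : ∃ r, 0 < r ∧ r < δ := ⟨δ / 2, half_pos hδ, half_lt_self hδ⟩
  have hpt {w : ℂ} (hw : ‖w‖ = 1) (hw_im : 0 < w.im) :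
      x₀ + r * w ∈ ball (x₀ : ℂ) δ ∩ {z | 0 < z.im} := by
    refine ⟨?_, by simpa using mul_pos hr hw_im⟩
    rw [mem_ball, Complex.dist_eq, add_sub_cancel_left, norm_mul, hw, norm_real,
      Real.norm_of_nonneg hr.le, mul_one]
    exact hrδ
  have him_H {w : ℂ} (hw : ‖w‖ = 1) (hw_im : 0 < w.im) :
      (H (x₀ + r * w)).im = r ^ n * ((w ^ n) * h (x₀ + r * w)).im := by
    have := congrArg Complex.im ((hnear _ (hpt hw hw_im).1).1.2)
    rw [sub_im, hx₀, sub_zero] at this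
    rw [this, add_sub_cancel_left, smul_eq_mul, mul_pow, ← ofReal_pow, mul_assoc, im_ofReal_mul]
  have hre_close {w : ℂ} (hw : ‖w‖ = 1) (hw_im : 0 < w.im) :
      |(h (x₀ + r * w)).re - (h x₀).re| < |(h x₀).re| := by
    have hclose := (hnear _ (hpt hw hw_im).1).2
    rw [dist_eq_norm] at hclose
    rw [← sub_re]
    exact (abs_re_le_norm _).trans_lt hclose
  have hζ3_norm : ‖ζ ^ 3‖ = 1 := by rw [norm_pow, hζ_norm, one_pow]
  have hζ3_pow : (ζ ^ 3) ^ n = -I := by rw [← pow_mul, mul_comm, pow_mul, hζ_pow]; simp [pow_succ]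
  have hsign : (H (x₀ + r * ζ)).im * (H (x₀ + r * ζ ^ 3)).im ≤ 0 := by
    have := mul_pos_of_abs_sub_lt_abs (hre_close hζ_norm hζ_im) (hre_close hζ3_norm hζ3_im)
    simp only [him_H hζ_norm hζ_im, him_H hζ3_norm hζ3_im, hζ_pow, hζ3_pow, I_mul_im, neg_mul,
      neg_im]
    nlinarith [mul_pos (pow_pos (pow_pos hr n) 2) this]
  have hcont : ContinuousOn (fun z => (H z).im) (ball (x₀ : ℂ) δ ∩ {z | 0 < z.im}) :=
    fun z hz => (continuous_im.continuousAt.comp (hnear z hz.1).1.1.1).continuousWithinAt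
  obtain ⟨z, ⟨hzδ, hz_im⟩, hz⟩ := ((convex_ball _ _).inter (convex_halfSpace_gt
    Complex.imLm.isLinear 0)).isPreconnected.exists_eq_zero_of_mul_nonpos hcont
    (hpt hζ_norm hζ_im) (hpt hζ3_norm hζ3_im) hsign
  exact (hnear z hzδ).1.1.2 hz_im hz

lemma exists_ne_zero_hasStrictDerivAt_ofReal (hρ : 0 < ρ)
    (hH : DifferentiableOn ℂ H (ball (x₀ : ℂ) ρ)) (hinj : Set.InjOn H (ball (x₀ : ℂ) ρ))
    (hreal : ∀ z ∈ ball (x₀ : ℂ) ρ, z.im = 0 → (H z).im = 0) :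
    ∃ a : ℝ, a ≠ 0 ∧ HasStrictDerivAt H a x₀ := by
  have hx₀ : (x₀ : ℂ) ∈ ball (x₀ : ℂ) ρ := mem_ball_self hρ
  have hball : ball (x₀ : ℂ) ρ ∈ 𝓝 (x₀ : ℂ) := isOpen_ball.mem_nhds hx₀
  have hHa : AnalyticAt ℂ H x₀ := hH.analyticAt hball
  have hnonconst : ¬ ∀ᶠ z in 𝓝 (x₀ : ℂ), H z - H x₀ = 0 := fun hev => by
    obtain ⟨z, ⟨hz, hz_ball⟩, hne⟩ := (((hev.and hball).filter_mono
      (nhdsWithin_le_nhds (s := {(x₀ : ℂ)}ᶜ))).and eventually_mem_nhdsWithin).exists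
    exact hne (hinj hz_ball hx₀ (sub_eq_zero.mp hz))
  obtain ⟨n, h, hh, ha, hfac⟩ :=
    (hHa.sub analyticAt_const).exists_eventuallyEq_pow_smul_nonzero_iff.mpr hnonconst
  have hreal' := eventually_im_eq_zero_of_real hρ hreal
  have ha_im : (h x₀).im = 0 := im_eq_zero_of_eventuallyEq_pow_smul hreal' hh.continuousAt hfac
  have hn0 : n ≠ 0 := by
    rintro rfl
    exact ha (by simpa using hfac.self_of_nhds.symm)
  have hn2 : n < 2 := lt_two_of_eventuallyEq_pow_smul
    (eventually_of_mem hball fun _ hz => hH.continuousOn.continuousAt (isOpen_ball.mem_nhds hz))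
    (eventually_of_mem hball fun _ hz him => im_ne_zero_of_injOn hρ hH hinj hreal hz him.ne')
    hreal'.self_of_nhds hh.continuousAt ha_im ha hfac
  obtain rfl : n = 1 := by omega
  have hderiv := hasDerivAt_of_eventuallyEq_sub_smul hh.continuousAt (by simpa using hfac)
  have ha_real : ((h x₀).re : ℂ) = h x₀ := Complex.ext rfl (by simp [ha_im])
  refine ⟨(h x₀).re, fun h0 => ha (Complex.ext h0 ha_im), ?_⟩
  rw [ha_real, ← hderiv.deriv]
  exact hHa.hasStrictDerivAt

lemma eventually_abs_im_sub_mul_im_le {a : ℝ} (hreal : ∀ᶠ t : ℝ in 𝓝 x₀, (H t).im = 0)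
    (hH : HasStrictDerivAt H a x₀) {ε : ℝ} (hε : 0 < ε) :
    ∀ᶠ z in 𝓝 (x₀ : ℂ), |(H z).im - a * z.im| ≤ ε * |z.im| := by
  have hre : Tendsto re (𝓝 (x₀ : ℂ)) (𝓝 x₀) := by simpa using continuous_re.tendsto (x₀ : ℂ)
  have hpair : Tendsto (fun z : ℂ => (z, (z.re : ℂ))) (𝓝 (x₀ : ℂ)) (𝓝 ((x₀ : ℂ), (x₀ : ℂ))) :=
    tendsto_id.prodMk_nhds ((continuous_ofReal.tendsto x₀).comp hre)
  filter_upwards [hpair.eventually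
    ((hasStrictDerivAt_iff_hasStrictFDerivAt.mp hH).isLittleO.def hε), hre.eventually hreal]
    with z hz hz_re
  have hsub : z - (z.re : ℂ) = z.im * I := Complex.ext (by simp) (by simp)
  simp only [ContinuousLinearMap.toSpanSingleton_apply, smul_eq_mul, hsub] at hz
  calc |(H z).im - a * z.im| = |(H z - H z.re - z.im * I * a).im| := by
        simp [hz_re, mul_comm]
    _ ≤ ‖H z - H z.re - z.im * I * a‖ := abs_im_le_norm _
    _ ≤ ε * |z.im| := by simpa using hz

end

/-- Let `D` be an open disk centered at a real point `x₀`, and let `H` be holomorphic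
and injective on `D` with `H(D ∩ ℝ) ⊆ ℝ`.  Then there are constants `C, D₀ > 0` and a
smaller disk `D'` centered at `x₀` on which `C|Im z| ≤ |Im H(z)| ≤ D₀|Im z|`. -/
theorem stmt12 (x₀ : ℝ) (ρ : ℝ) (hρ : 0 < ρ) (H : ℂ → ℂ)
    (hH : DifferentiableOn ℂ H (ball (x₀ : ℂ) ρ))
    (hinj : Set.InjOn H (ball (x₀ : ℂ) ρ))
    (hreal : ∀ z ∈ ball (x₀ : ℂ) ρ, z.im = 0 → (H z).im = 0) :
    ∃ C > (0 : ℝ), ∃ D₀ > (0 : ℝ), ∃ ρ' > (0 : ℝ),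
      ball (x₀ : ℂ) ρ' ⊆ ball (x₀ : ℂ) ρ ∧
      ∀ z ∈ ball (x₀ : ℂ) ρ',
        C * |z.im| ≤ |(H z).im| ∧ |(H z).im| ≤ D₀ * |z.im| := by
  obtain ⟨a, ha, hderiv⟩ := exists_ne_zero_hasStrictDerivAt_ofReal hρ hH hinj hreal
  have ha' : 0 < |a| := abs_pos.mpr ha
  obtain ⟨δ, hδ, hest⟩ := eventually_nhds_iff_ball.mp <| eventually_abs_im_sub_mul_im_le
    (eventually_im_eq_zero_of_real hρ hreal) hderiv (half_pos ha')
  refine ⟨|a| / 2, half_pos ha', 3 * |a| / 2, by positivity, min δ ρ, lt_min hδ hρ,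
    ball_subset_ball (min_le_right _ _), fun z hz => ?_⟩
  have hclose := (abs_abs_sub_abs_le_abs_sub _ _).trans
    (hest z (ball_subset_ball (min_le_left _ _) hz))
  rw [abs_mul] at hclose
  obtain ⟨hlow, hhigh⟩ := abs_le.mp hclose
  constructor <;> linarith
end

section
/- Let D ⊆ ℂ be an open disk centered at a point x₀ ∈ ℝ, and let H : D → ℂ be holomorphic and injective with H(D ∩ ℝ) ⊆ ℝ. Then there exist K > 0 and an open disk D' ⊆ D centered at x₀ such that for every z ∈ D' with Im z ≠ 0, one has Im H(z) ≠ 0 and 1/K ≤ (|Im z| · |H'(z)|) / |Im H(z)| ≤ K. (This expresses that the pullback under H of the hyperbolic density λ_ℍ(w) = 1/|Im w| of the upper half plane is comparable to λ_ℍ near the real boundary point x₀.) -/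
/-!
An injective holomorphic map has nonvanishing derivative: if `H'(x₀) = 0`, then near `x₀` we can
write `H - H(x₀) = ψⁿ` with `n ≥ 2` and `ψ` a local biholomorphism, and `H` then identifies the
`ψ`-preimages of `w` and `e^{2πi/n} w`. Since `H` is real on the real axis, `a = H'(x₀)` is real,
and on a disk where `|H' - a| ≤ |a|/2` the mean value inequality for `H(z) - a z` on the vertical
segment from `Re z` to `z` gives `|Im H(z) - a Im z| ≤ |a| |Im z| / 2`. So `|Im H(z)| / |Im z|` and
`|H'(z)|` both lie in `[|a|/2, 3|a|/2]`, and the ratio lies in `[1/3, 3]`.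
-/

open Complex Filter Metric Set Topology

theorem AnalyticAt.exists_pow_eq_of_ne_zero {g : ℂ → ℂ} {z₀ : ℂ} {n : ℕ} (hg : AnalyticAt ℂ g z₀)
    (hg0 : g z₀ ≠ 0) (hn : n ≠ 0) :
    ∃ q : ℂ → ℂ, AnalyticAt ℂ q z₀ ∧ q z₀ ≠ 0 ∧ ∀ z, q z ^ n = g z := by
  refine ⟨fun z => g z₀ ^ (n⁻¹ : ℂ) * (g z / g z₀) ^ (n⁻¹ : ℂ), ?_, ?_, fun z => ?_⟩
  · refine analyticAt_const.mul ((hg.div analyticAt_const hg0).cpow analyticAt_const ?_)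
    simp [div_self hg0]
  · rintro hq
    simp only [div_self hg0, one_cpow, mul_one] at hq
    exact hg0 (by rw [← cpow_nat_inv_pow (g z₀) hn, hq, zero_pow hn])
  · rw [mul_pow, cpow_nat_inv_pow _ hn, cpow_nat_inv_pow _ hn, mul_div_cancel₀ _ hg0]

theorem AnalyticAt.exists_eventuallyEq_pow_of_analyticOrderAt_eq {f : ℂ → ℂ} {z₀ : ℂ} {n : ℕ}
    (hf : AnalyticAt ℂ f z₀) (h : analyticOrderAt f z₀ = n) (hn : n ≠ 0) :
    ∃ ψ : ℂ → ℂ, AnalyticAt ℂ ψ z₀ ∧ ψ z₀ = 0 ∧ deriv ψ z₀ ≠ 0 ∧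
      f =ᶠ[𝓝 z₀] fun z => ψ z ^ n := by
  obtain ⟨g, hg, hg0, hfg⟩ := hf.analyticOrderAt_eq_natCast.mp h
  obtain ⟨q, hq, hq0, hqg⟩ := hg.exists_pow_eq_of_ne_zero hg0 hn
  have hψ : HasDerivAt (fun z => (z - z₀) * q z) (q z₀) z₀ := by
    simpa using ((hasDerivAt_id z₀).sub_const z₀).fun_mul hq.differentiableAt.hasDerivAt
  refine ⟨fun z => (z - z₀) * q z, (analyticAt_id.sub analyticAt_const).mul hq, by simp,
    hψ.deriv ▸ hq0, ?_⟩
  filter_upwards [hfg] with z hz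
  rw [hz, smul_eq_mul, mul_pow, hqg]

theorem not_injOn_of_eventuallyEq_pow {f ψ : ℂ → ℂ} {z₀ : ℂ} {n : ℕ} {U : Set ℂ}
    (hψ : AnalyticAt ℂ ψ z₀) (hψ0 : ψ z₀ = 0) (hψ' : deriv ψ z₀ ≠ 0) (hn : 2 ≤ n)
    (hf : f =ᶠ[𝓝 z₀] fun z => ψ z ^ n) (hU : U ∈ 𝓝 z₀) : ¬ InjOn f U := by
  intro hinj
  set S := U ∩ {z | f z = ψ z ^ n}
  set ζ := cexp (2 * Real.pi * I / n)
  have hζ : IsPrimitiveRoot ζ n := isPrimitiveRoot_exp n (by omega)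
  have hS : ψ '' S ∈ 𝓝 0 := by
    rw [← hψ0, ← hψ.hasStrictDerivAt.map_nhds_eq hψ']
    exact image_mem_map (inter_mem hU hf)
  have hζS : ∀ᶠ w in 𝓝 0, ζ * w ∈ ψ '' S :=
    (by simpa using (continuous_const_mul ζ).tendsto 0 : Tendsto (ζ * ·) (𝓝 0) (𝓝 0)) hS
  obtain ⟨w, ⟨⟨z₁, ⟨hz₁U, hfz₁⟩, hψz₁⟩, ⟨z₂, ⟨hz₂U, hfz₂⟩, hψz₂⟩⟩, hw0⟩ :=
    (((Filter.Eventually.and hS hζS).filter_mono nhdsWithin_le_nhds).and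
      (self_mem_nhdsWithin (s := {(0 : ℂ)}ᶜ))).exists
  have hz : z₁ = z₂ := hinj hz₁U hz₂U (by
    simp only [mem_ofPred_eq] at hfz₁ hfz₂
    rw [hfz₁, hfz₂, hψz₁, hψz₂, mul_pow, hζ.pow_eq_one, one_mul])
  refine hζ.ne_one (by omega) ((mul_eq_right₀ hw0).mp ?_)
  rw [← hψz₂, ← hz, hψz₁]

theorem AnalyticAt.deriv_ne_zero_of_injOn {f : ℂ → ℂ} {z₀ : ℂ} {U : Set ℂ}
    (hf : AnalyticAt ℂ f z₀) (hU : U ∈ 𝓝 z₀) (hinj : InjOn f U) : deriv f z₀ ≠ 0 := by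
  intro hf'
  have hshift : InjOn (f · - f z₀) U := fun z hz w hw h => hinj hz hw (sub_left_inj.mp h)
  have htwo : 2 ≤ analyticOrderAt (f · - f z₀) z₀ := by
    have h1 : 1 ≤ analyticOrderAt (deriv f) z₀ :=
      Order.one_le_iff_ne_zero.mpr (hf.deriv.analyticOrderAt_ne_zero.mpr hf')
    rw [← hf.analyticOrderAt_deriv_add_one]
    simpa [one_add_one_eq_two] using add_le_add_left h1 1
  cases h : analyticOrderAt (f · - f z₀) z₀ with
  | top =>
    obtain ⟨z, ⟨hzU, hz⟩, hne⟩ := ((Filter.Eventually.and hU (analyticOrderAt_eq_top.mp h)).filter_mono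
      nhdsWithin_le_nhds |>.and (self_mem_nhdsWithin (s := {z₀}ᶜ))).exists
    exact hne (hshift hzU (mem_of_mem_nhds hU) (by simpa using hz))
  | coe n =>
    rw [h] at htwo
    have hn : 2 ≤ n := by exact_mod_cast htwo
    obtain ⟨ψ, hψ, hψ0, hψ', hfψ⟩ :=
      (hf.sub analyticAt_const).exists_eventuallyEq_pow_of_analyticOrderAt_eq h (by omega)
    exact not_injOn_of_eventuallyEq_pow hψ hψ0 hψ' hn hfψ hU hshift

theorem im_deriv_eq_zero_of_eventually_im_eq_zero {f : ℂ → ℂ} {x : ℝ}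
    (hf : DifferentiableAt ℂ f x) (hreal : ∀ᶠ t : ℝ in 𝓝 x, (f t).im = 0) :
    (deriv f x).im = 0 := by
  have hd : HasDerivAt (fun t : ℝ => (f t).im) (deriv f x).im x :=
    imCLM.hasFDerivAt.comp_hasDerivAt x hf.hasDerivAt.comp_ofReal
  exact hd.unique ((hasDerivAt_const x (0 : ℝ)).congr_of_eventuallyEq hreal)

theorem ofReal_re_mem_ball {x₀ r : ℝ} {z : ℂ} (hz : z ∈ ball (x₀ : ℂ) r) :
    (z.re : ℂ) ∈ ball (x₀ : ℂ) r := by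
  rw [mem_ball, dist_eq] at hz ⊢
  calc ‖(z.re : ℂ) - x₀‖ = |(z - x₀).re| := by simp [← ofReal_sub]
    _ ≤ ‖z - x₀‖ := abs_re_le_norm _
    _ < r := hz

theorem abs_im_sub_mul_im_le {f : ℂ → ℂ} {s : Set ℂ} {a ε : ℝ} {z : ℂ} (hs : Convex ℝ s)
    (hf : ∀ w ∈ s, DifferentiableAt ℂ f w) (hε : ∀ w ∈ s, ‖deriv f w - a‖ ≤ ε)
    (hz : z ∈ s) (hre : (z.re : ℂ) ∈ s) (hreal : (f z.re).im = 0) :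
    |(f z).im - a * z.im| ≤ ε * |z.im| := by
  have hg : ∀ w ∈ s, HasDerivAt (fun w => f w - a * w) (deriv f w - a) w := fun w hw => by
    simpa using (hf w hw).hasDerivAt.fun_sub ((hasDerivAt_id w).const_mul (a : ℂ))
  have hmvt := hs.norm_image_sub_le_of_norm_deriv_le (fun w hw => (hg w hw).differentiableAt)
    (fun w hw => (hg w hw).deriv ▸ hε w hw) hre hz
  calc |(f z).im - a * z.im| = |((f z - a * z) - (f z.re - a * z.re)).im| := by
        simp [hreal]
    _ ≤ ‖(f z - a * z) - (f z.re - a * z.re)‖ := abs_im_le_norm _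
    _ ≤ ε * ‖z - z.re‖ := hmvt
    _ = ε * |z.im| := by
        rw [show z - z.re = (z.im : ℂ) * I by apply Complex.ext <;> simp]
        simp

theorem ne_zero_and_one_third_le_div_le_three {t u d a : ℝ} (ha : a ≠ 0) (ht : t ≠ 0)
    (hu : |u - a * t| ≤ |a| / 2 * |t|) (hd : |(d - |a|)| ≤ |a| / 2) :
    u ≠ 0 ∧ 1 / 3 ≤ |t| * d / |u| ∧ |t| * d / |u| ≤ 3 := by
  have ha' : 0 < |a| := abs_pos.mpr ha
  have ht' : 0 < |t| := abs_pos.mpr ht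
  have hlow : |a| / 2 * |t| ≤ |u| := by
    have := abs_sub_abs_le_abs_sub (a * t) u
    rw [abs_sub_comm, abs_mul] at this
    linarith
  have hhigh : |u| ≤ 3 * |a| / 2 * |t| := by
    have := abs_sub_abs_le_abs_sub u (a * t)
    rw [abs_mul] at this
    linarith
  have hu' : 0 < |u| := lt_of_lt_of_le (by positivity) hlow
  have hd' := abs_le.mp hd
  refine ⟨abs_pos.mp hu', ?_, ?_⟩
  · rw [le_div_iff₀ hu']
    nlinarith
  · rw [div_le_iff₀ hu']
    nlinarith

/-- Let `D` be an open disk centered at a real point `x₀`, and let `H` be holomorphic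
and injective on `D` with `H(D ∩ ℝ) ⊆ ℝ`.  Then there are `K > 0` and a smaller disk
`D'` centered at `x₀` such that for `z ∈ D'` with `Im z ≠ 0` we have `Im H(z) ≠ 0` and
`1/K ≤ |Im z| |H'(z)| / |Im H(z)| ≤ K`: the pullback under `H` of the hyperbolic
density of the upper half plane is comparable to it near `x₀`. -/
theorem stmt13 (x₀ : ℝ) (ρ : ℝ) (hρ : 0 < ρ) (H : ℂ → ℂ)
    (hH : DifferentiableOn ℂ H (ball (x₀ : ℂ) ρ))
    (hinj : Set.InjOn H (ball (x₀ : ℂ) ρ))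
    (hreal : ∀ z ∈ ball (x₀ : ℂ) ρ, z.im = 0 → (H z).im = 0) :
    ∃ K > (0 : ℝ), ∃ ρ' > (0 : ℝ),
      ball (x₀ : ℂ) ρ' ⊆ ball (x₀ : ℂ) ρ ∧
      ∀ z ∈ ball (x₀ : ℂ) ρ', z.im ≠ 0 →
        (H z).im ≠ 0 ∧
        1 / K ≤ (|z.im| * ‖deriv H z‖) / |(H z).im| ∧
        (|z.im| * ‖deriv H z‖) / |(H z).im| ≤ K := by
  have hball : ball (x₀ : ℂ) ρ ∈ 𝓝 (x₀ : ℂ) := ball_mem_nhds _ hρ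
  have hAn : AnalyticAt ℂ H x₀ := hH.analyticAt hball
  have hderiv_real : (deriv H x₀).im = 0 :=
    im_deriv_eq_zero_of_eventually_im_eq_zero hAn.differentiableAt <| by
      filter_upwards [continuous_ofReal.continuousAt.preimage_mem_nhds hball] with t ht
      exact hreal _ ht (ofReal_im t)
  set a := (deriv H x₀).re
  have ha : deriv H x₀ = a := Complex.ext rfl (by simpa using hderiv_real)
  have ha0 : a ≠ 0 := fun h => hAn.deriv_ne_zero_of_injOn hball hinj (by rw [ha, h, ofReal_zero])
  obtain ⟨δ, hδ, hδball⟩ : ∃ δ > 0, ∀ w ∈ ball (x₀ : ℂ) δ,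
      w ∈ ball (x₀ : ℂ) ρ ∧ dist (deriv H w) (deriv H x₀) < |a| / 2 :=
    eventually_nhds_iff_ball.mp <| (Filter.Eventually.and hball <|
      (hH.deriv isOpen_ball).continuousOn.continuousAt hball |>.eventually
        (ball_mem_nhds _ (by positivity)))
  refine ⟨3, by norm_num, δ, hδ, fun w hw => (hδball w hw).1, fun z hz hzim => ?_⟩
  have hre := ofReal_re_mem_ball hz
  have him : |(H z).im - a * z.im| ≤ |a| / 2 * |z.im| :=
    abs_im_sub_mul_im_le (convex_ball _ _)
      (fun w hw => hH.differentiableAt (isOpen_ball.mem_nhds (hδball w hw).1))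
      (fun w hw => by simpa [dist_eq_norm, ha] using (hδball w hw).2.le) hz hre
      (hreal _ (hδball _ hre).1 (ofReal_im _))
  have hnorm : |(‖deriv H z‖ - |a|)| ≤ |a| / 2 := by
    simpa [ha] using (abs_norm_sub_norm_le (deriv H z) (deriv H x₀)).trans
      ((dist_eq_norm _ _).symm.trans_le (hδball z hz).2.le)
  simpa using ne_zero_and_one_third_le_div_le_three ha0 hzim him hnorm
end
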